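/- arXiv:1903.04867 — 7 statements merged into one kernel-verified Lean document; each statement's English description precedes it below -/
import Mathlib

section
/- For a path graph P_{n+1} with vertices v_0, v_1, ..., v_n and a target vertex v_0, the t-pebbling number f_t(P_{n+1}, v_0) equals t·2^n; that is, any distribution of t·2^n pebbles on the vertices of the path allows moving t pebbles to v_0 via pebbling moves (each move removes two pebbles from a vertex and places one on an adjacent vertex), and there exists a distribution of t·2^n − 1 pebbles from which this is impossible. -/
open SimpleGraph Finset

variable {V : Type*} [DecidableEq V]

/-- A single pebbling move: remove two pebbles from `u` and add one on an adjacent `v`. -/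
def PebStep (G : SimpleGraph V) (D D' : V → ℕ) : Prop :=
  ∃ u v, G.Adj u v ∧ 2 ≤ D u ∧
    D' = fun x => if x = u then D u - 2 else if x = v then D v + 1 else D x

/-- Reachability by a sequence of pebbling moves. -/
def PebReach (G : SimpleGraph V) : (V → ℕ) → (V → ℕ) → Prop :=
  Relation.ReflTransGen (PebStep G)

/-- `D` is `ω`-solvable: some sequence of pebbling moves reaches `D'` with `D' ≥ ω`. -/
def Solvable (G : SimpleGraph V) (ω D : V → ℕ) : Prop :=
  ∃ D', PebReach G D D' ∧ ∀ v, ω v ≤ D' v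

/-- The `ω`-cover pebbling number: least `N` such that every distribution of
`N` pebbles is `ω`-solvable. -/
noncomputable def coverNum [Fintype V] (G : SimpleGraph V) (ω : V → ℕ) : ℕ :=
  sInf {N | ∀ D : V → ℕ, (∑ v, D v) = N → Solvable G ω D}

/-- The `t`-pebbling number of a vertex `v`: least `N` such that from every
distribution of `N` pebbles one can move `t` pebbles onto `v`. -/
noncomputable def ftNum [Fintype V] (G : SimpleGraph V) (v : V) (t : ℕ) : ℕ :=
  sInf {N | ∀ D : V → ℕ, (∑ x, D x) = N → ∃ D', PebReach G D D' ∧ t ≤ D' v}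

set_option maxHeartbeats 1000000

lemma pebReach_moveMany (G : SimpleGraph V) {u v : V} (h : G.Adj u v) :
    ∀ (m : ℕ) (D : V → ℕ), 2 * m ≤ D u →
    PebReach G D (fun x => if x = u then D u - 2 * m else if x = v then D v + m else D x) := by
  have hne : u ≠ v := G.ne_of_adj h
  intro m
  induction m with
  | zero =>
    intro D _
    have : (fun x => if x = u then D u - 2 * 0 else if x = v then D v + 0 else D x) = D := by
      funext x; by_cases hx : x = u <;> by_cases hy : x = v <;> simp [hx, hy, hne, hne.symm]
    rw [this]; exact Relation.ReflTransGen.refl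
  | succ m ih =>
    intro D hm
    have h2 : 2 ≤ D u := by omega
    set D1 : V → ℕ := fun x => if x = u then D u - 2 else if x = v then D v + 1 else D x with hD1
    have hstep : PebStep G D D1 := ⟨u, v, h, h2, rfl⟩
    have hD1u : D1 u = D u - 2 := by simp [hD1]
    have hD1v : D1 v = D v + 1 := by simp [hD1, hne.symm]
    have hrest := ih D1 (by omega)
    have heq : (fun x => if x = u then D1 u - 2 * m else if x = v then D1 v + m else D1 x)
        = (fun x => if x = u then D u - 2 * (m + 1) else if x = v then D v + (m + 1) else D x) := by
      funext x
      by_cases hx : x = u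
      · simp [hx, hD1u]; omega
      · by_cases hy : x = v
        · simp [hx, hy, hD1v, hne.symm]; omega
        · simp [hD1, hx, hy]
    rw [heq] at hrest
    exact Relation.ReflTransGen.head hstep hrest

/-- The greedy carry value: `carryP n D j` is the number of pebbles accumulated at
vertex `n - j` after greedily pushing everything from the far end toward `0`. -/
def carryP (n : ℕ) (D : Fin (n + 1) → ℕ) : ℕ → ℕ
  | 0 => D ⟨n, Nat.lt_succ_self n⟩
  | j + 1 => D ⟨n - (j + 1), by omega⟩ + carryP n D j / 2

lemma reach_carry (n : ℕ) (D : Fin (n + 1) → ℕ) :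
    ∀ j : ℕ, j ≤ n →
    ∃ D', PebReach (pathGraph (n + 1)) D D' ∧
      carryP n D j ≤ D' ⟨n - j, by omega⟩ ∧
      ∀ i : Fin (n + 1), i.val < n - j → D' i = D i := by
  intro j
  induction j with
  | zero => exact fun _ => ⟨D, Relation.ReflTransGen.refl, le_refl _, fun _ _ => rfl⟩
  | succ j ih =>
    intro hj
    obtain ⟨D', hR, hc, hlow⟩ := ih (by omega)
    set u : Fin (n + 1) := ⟨n - j, by omega⟩ with hu
    set v : Fin (n + 1) := ⟨n - (j + 1), by omega⟩ with hv
    have hadj : (pathGraph (n + 1)).Adj u v := by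
      rw [pathGraph_adj]; right; simp [hu, hv]; omega
    set m : ℕ := carryP n D j / 2 with hm
    have hmle : 2 * m ≤ D' u := le_trans (by omega) hc
    have hmove := pebReach_moveMany (pathGraph (n + 1)) hadj m D' hmle
    refine ⟨_, Relation.ReflTransGen.trans hR hmove, ?_, ?_⟩
    · show carryP n D (j + 1) ≤
        if v = u then D' u - 2 * m else if v = v then D' v + m else D' v
      have hvu : v ≠ u := by
        intro h; apply_fun Fin.val at h; simp [hu, hv] at h; omega
      have hDv : D' v = D v := hlow v (by simp [hv]; omega)
      have hcl : carryP n D (j + 1) = D v + carryP n D j / 2 := rfl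
      rw [if_neg hvu, if_pos rfl, hcl, hDv]
    · intro i hi
      show (fun x => if x = u then D' u - 2 * m else if x = v then D' v + m else D' x) i = D i
      have hiu : i ≠ u := by
        intro h; apply_fun Fin.val at h; simp [hu] at h; omega
      have hiv : i ≠ v := by
        intro h; apply_fun Fin.val at h; simp [hv] at h; omega
      simp only [if_neg hiu, if_neg hiv]
      exact hlow i (by omega)

lemma carry_lower (n : ℕ) (D : Fin (n + 1) → ℕ) :
    ∀ j : ℕ, j ≤ n →
    (∑ i ∈ Finset.range (j + 1), D ⟨n - i, by omega⟩) < 2 ^ j * (carryP n D j + 1) := by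
  intro j
  induction j with
  | zero => simp [carryP]
  | succ j ih =>
    intro hj
    have hS := ih (by omega)
    rw [Finset.sum_range_succ]
    show _ + D ⟨n - (j + 1), _⟩ < 2 ^ (j + 1) * (D ⟨n - (j + 1), _⟩ + carryP n D j / 2 + 1)
    set S := ∑ i ∈ Finset.range (j + 1), D ⟨n - i, by omega⟩
    set a := carryP n D j
    set d := D (⟨n - (j + 1), by omega⟩ : Fin (n + 1))
    have ha : a ≤ 2 * (a / 2) + 1 := by omega
    have hp : (1 : ℕ) ≤ 2 ^ j := Nat.one_le_two_pow
    have h1 : 2 ^ j * (a + 1) ≤ 2 ^ j * (2 * (a / 2) + 2) := Nat.mul_le_mul_left _ (by omega)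
    have h2 : d ≤ 2 ^ j * 2 * d := Nat.le_mul_of_pos_left d (by positivity)
    have h3 : 2 ^ j * (2 * (a / 2) + 2) + 2 ^ j * 2 * d = 2 ^ j * 2 * (d + a / 2 + 1) := by ring
    rw [pow_succ]
    omega

/-- The weight function: a pebble on vertex `i` is worth `2^(n-i)`. -/
def wtP (n : ℕ) (D : Fin (n + 1) → ℕ) : ℕ := ∑ i, D i * 2 ^ (n - i.val)

lemma wt_step {n : ℕ} {D D' : Fin (n + 1) → ℕ}
    (h : PebStep (pathGraph (n + 1)) D D') : wtP n D' ≤ wtP n D := by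
  obtain ⟨u, v, hadj, h2, rfl⟩ := h
  have hne : u ≠ v := (pathGraph (n + 1)).ne_of_adj hadj
  have hwv : 2 ^ (n - v.val) ≤ 2 * 2 ^ (n - u.val) := by
    rcases pathGraph_adj.mp hadj with h | h
    · have : n - v.val ≤ n - u.val := by omega
      calc 2 ^ (n - v.val) ≤ 2 ^ (n - u.val) := Nat.pow_le_pow_right (by norm_num) this
        _ ≤ 2 * 2 ^ (n - u.val) := by omega
    · have hu : u.val ≤ n := by omega
      have : n - v.val = (n - u.val) + 1 := by omega
      rw [this, pow_succ]; omega
  have key : ∀ i : Fin (n + 1),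
      (fun x => if x = u then D u - 2 else if x = v then D v + 1 else D x) i * 2 ^ (n - i.val)
        + (if i = u then 2 * 2 ^ (n - u.val) else 0)
      = D i * 2 ^ (n - i.val) + (if i = v then 2 ^ (n - v.val) else 0) := by
    intro i
    by_cases hiu : i = u
    · subst hiu
      obtain ⟨k, hk⟩ := Nat.exists_eq_add_of_le h2
      have h4 : 2 + k - 2 = k := by omega
      simp only [hne, hk, h4, if_pos, if_neg, if_false, if_true, eq_self_iff_true,
        ite_true, ite_false]
      ring
    · by_cases hiv : i = v
      · subst hiv
        simp only [hiu, if_pos, if_neg, if_false, if_true, eq_self_iff_true,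
          ite_true, ite_false]
        ring
      · simp [hiu, hiv]
  have hsum := Finset.sum_congr rfl (fun i (_ : i ∈ Finset.univ) => key i)
  rw [Finset.sum_add_distrib, Finset.sum_add_distrib,
    Finset.sum_ite_eq' Finset.univ u, Finset.sum_ite_eq' Finset.univ v] at hsum
  simp only [Finset.mem_univ, if_pos] at hsum
  have e1 : wtP n (fun x => if x = u then D u - 2 else if x = v then D v + 1 else D x)
      + 2 * 2 ^ (n - u.val) = wtP n D + 2 ^ (n - v.val) := hsum
  omega

lemma wt_reach {n : ℕ} {D D' : Fin (n + 1) → ℕ}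
    (h : PebReach (pathGraph (n + 1)) D D') : wtP n D' ≤ wtP n D := by
  induction h with
  | refl => exact le_refl _
  | tail _ hstep ih => exact le_trans (wt_step hstep) ih

/-- No distribution of fewer than `t·2^n` pebbles all on the far end can place
`t` pebbles on `0`. -/
lemma unsolvable_of_lt (n t N : ℕ) (hN : N < t * 2 ^ n) :
    ¬ ∃ D', PebReach (pathGraph (n + 1))
        (fun i => if i = Fin.last n then N else 0) D' ∧ t ≤ D' 0 := by
  rintro ⟨D', hR, ht'⟩
  have hw0 : wtP n (fun i => if i = Fin.last n then N else 0) = N := by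
    unfold wtP
    rw [Finset.sum_eq_single (Fin.last n)]
    · simp [Fin.last]
    · intro b _ hb; simp [hb]
    · simp
  have hle := wt_reach hR
  rw [hw0] at hle
  have hterm : D' 0 * 2 ^ (n - (0 : Fin (n + 1)).val) ≤ wtP n D' := by
    exact Finset.single_le_sum (f := fun i => D' i * 2 ^ (n - i.val))
      (fun i _ => Nat.zero_le _) (Finset.mem_univ 0)
  have h0 : ((0 : Fin (n + 1)) : ℕ) = 0 := rfl
  rw [h0, Nat.sub_zero] at hterm
  have : t * 2 ^ n ≤ D' 0 * 2 ^ n :=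
    Nat.mul_le_mul_right _ ht'
  omega

lemma solvable_of_eq (n t : ℕ) (D : Fin (n + 1) → ℕ) (hD : (∑ i, D i) = t * 2 ^ n) :
    ∃ D', PebReach (pathGraph (n + 1)) D D' ∧ t ≤ D' 0 := by
  obtain ⟨D', hR, hc, _⟩ := reach_carry n D n (le_refl n)
  have hsum : (∑ i ∈ Finset.range (n + 1), D ⟨n - i, by omega⟩) = ∑ i, D i := by
    rw [show (∑ i, D i) = ∑ i ∈ Finset.range (n + 1), D ⟨min i n, by omega⟩ by
      rw [← Fin.sum_univ_eq_sum_range (fun i => D ⟨min i n, by omega⟩)]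
      exact Finset.sum_congr rfl (fun i _ => by congr 1; exact Fin.ext (by simp [Nat.min_eq_left (Nat.le_of_lt_succ i.isLt)]))]
    rw [← Finset.sum_range_reflect]
    refine Finset.sum_congr rfl (fun i hi => ?_)
    rw [Finset.mem_range] at hi
    congr 1
    exact Fin.ext (by simp; omega)
  have hlt := carry_lower n D n (le_refl n)
  rw [hsum, hD] at hlt
  have htc : t ≤ carryP n D n := by
    rw [mul_comm] at hlt
    exact Nat.lt_succ_iff.mp (Nat.lt_of_mul_lt_mul_left hlt)
  refine ⟨D', hR, ?_⟩
  have : (⟨n - n, by omega⟩ : Fin (n + 1)) = 0 := Fin.ext (by simp)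
  rw [this] at hc
  omega


lemma sum_point (n N : ℕ) :
    (∑ i : Fin (n + 1), (if i = Fin.last n then N else 0)) = N := by
  rw [Finset.sum_ite_eq' Finset.univ (Fin.last n) (fun _ => N)]
  simp

/-- The `t`-pebbling number of the endpoint `v₀ = 0` of the path `P_{n+1}` is `t·2ⁿ`:
every distribution of `t·2ⁿ` pebbles moves `t` pebbles onto `v₀`, and some distribution
of `t·2ⁿ - 1` pebbles cannot. -/
theorem t_pebbling_number_path (n t : ℕ) (ht : 1 ≤ t) :
    ftNum (SimpleGraph.pathGraph (n + 1)) 0 t = t * 2 ^ n ∧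
    (∀ D : Fin (n + 1) → ℕ, (∑ i, D i) = t * 2 ^ n →
      ∃ D', PebReach (SimpleGraph.pathGraph (n + 1)) D D' ∧ t ≤ D' 0) ∧
    (∃ D : Fin (n + 1) → ℕ, (∑ i, D i) = t * 2 ^ n - 1 ∧
      ¬ ∃ D', PebReach (SimpleGraph.pathGraph (n + 1)) D D' ∧ t ≤ D' 0) := by
  have hpow : 1 ≤ 2 ^ n := Nat.one_le_two_pow
  have hmem : t * 2 ^ n ∈ {N | ∀ D : Fin (n + 1) → ℕ, (∑ x, D x) = N →
      ∃ D', PebReach (pathGraph (n + 1)) D D' ∧ t ≤ D' 0} :=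
    fun D hD => solvable_of_eq n t D hD
  refine ⟨le_antisymm (Nat.sInf_le hmem) (le_csInf ⟨_, hmem⟩ ?_),
    fun D hD => solvable_of_eq n t D hD,
    ⟨fun i => if i = Fin.last n then t * 2 ^ n - 1 else 0, sum_point n _,
      unsolvable_of_lt n t _ (by have := Nat.mul_le_mul ht hpow; omega)⟩⟩
  intro b hb
  by_contra hcon
  push_neg at hcon
  exact unsolvable_of_lt n t b hcon
    (hb (fun i => if i = Fin.last n then b else 0) (sum_point n b))
end

section
/- (No-Cycle Lemma) Let S be a sequence of pebbling moves on a graph G transforming a distribution D₀ into a distribution D. Then there exists a sequence S* of pebbling moves from D₀ reaching a distribution D* such that D*(v) ≥ D(v) for every vertex v, and the transition multidigraph T(G, S*) — whose vertex set is V(G) and which has one directed edge u→v for each move in S* taking two pebbles from u and placing one on v — contains no directed cycle. -/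
open SimpleGraph Finset

variable {V : Type*} [DecidableEq V]

/-- A valid sequence of pebbling moves: `ValidSeq G D S D'` means executing the
moves of `S` in order (each move `(u,v)` removes two pebbles from `u`, which must
hold at least two, and adds one on the adjacent vertex `v`) transforms `D` into `D'`. -/
inductive ValidSeq (G : SimpleGraph V) : (V → ℕ) → List (V × V) → (V → ℕ) → Prop
  | nil (D : V → ℕ) : ValidSeq G D [] D
  | cons (D : V → ℕ) (u v : V) (huv : G.Adj u v) (h2 : 2 ≤ D u) {S : List (V × V)}
      {D' : V → ℕ}
      (h : ValidSeq G (fun x => if x = u then D u - 2 else if x = v then D v + 1 else D x)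
        S D') :
      ValidSeq G D ((u, v) :: S) D'

/-- A generalized pebbling move among vertices of `A`, on integer-valued distributions. -/
def ZStepOn (G : SimpleGraph V) (A : Set V) (C C' : V → ℤ) : Prop :=
  ∃ u v, u ∈ A ∧ v ∈ A ∧ G.Adj u v ∧ 2 ≤ C u ∧
    C' = fun x => if x = u then C u - 2 else if x = v then C v + 1 else C x

/-- A generalized distribution is `0`-solvable within `A` if pebbling moves inside `A`
reach a distribution nonnegative on `A`. -/
def ZSolvableOn (G : SimpleGraph V) (A : Set V) (C : V → ℤ) : Prop :=
  ∃ C', Relation.ReflTransGen (ZStepOn G A) C C' ∧ ∀ x ∈ A, 0 ≤ C' x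

/-- Iterated leaf contraction: `Contract G s C s' C'` means the generalized
distribution `C` on the vertex set `s` can be contracted to `C'` on `s'` by repeatedly
deleting a leaf `x` (a vertex with a unique neighbor `y` in the current set), replacing
`C y` by `C y + ⌊C x / 2⌋` if `C x ≥ 0` and by `C y + 2 C x` if `C x < 0`. -/
inductive Contract (G : SimpleGraph V) : Finset V → (V → ℤ) → Finset V → (V → ℤ) → Prop
  | refl (s : Finset V) (C : V → ℤ) : Contract G s C s C
  | step {s : Finset V} {C : V → ℤ} (x y : V) (hx : x ∈ s) (hy : y ∈ s)
      (hadj : G.Adj x y) (hleaf : ∀ z ∈ s, G.Adj x z → z = y)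
      {s' : Finset V} {C' : V → ℤ}
      (h : Contract G (s.erase x)
        (fun w => if w = y then C y + (if 0 ≤ C x then C x / 2 else 2 * C x) else C w)
        s' C') :
      Contract G s C s' C'

/-!
Only the in- and out-degrees of the multiset of moves determine the final distribution. Deleting
a directed cycle from this multiset therefore costs nothing: each vertex on the cycle makes one
move fewer (keeping two pebbles) and receives one move fewer (losing one). If instead some move
starts at a vertex that receives no move, that vertex holds all its pebbles from the start, at
least two per outgoing move, so this move can be executed first. One of the two steps applies as
long as moves are left, since following predecessors from vertex to vertex must eventually close
a cycle. Every executed move starts at a vertex that receives nothing afterwards, so the executed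
moves form no cycle.
-/

open Function

theorem Set.MapsTo.exists_mem_periodicPts {α : Type*} {f : α → α} {s : Set α}
    (hf : Set.MapsTo f s s) (hs : s.Finite) {x : α} (hx : x ∈ s) :
    ∃ y ∈ s, y ∈ periodicPts f := by
  obtain ⟨a, b, hab, heq⟩ :=
    hs.exists_lt_map_eq_of_forall_mem (f := fun n => f^[n] x) fun n => hf.iterate n hx
  refine ⟨f^[a] x, hf.iterate a hx, mk_mem_periodicPts (n := b - a) (by omega) ?_⟩
  change f^[b - a] (f^[a] x) = f^[a] x
  rw [← iterate_add_apply, Nat.sub_add_cancel hab.le]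
  exact heq.symm

namespace Function

variable {α : Type*}

noncomputable def orbitArcs (f : α → α) (x : α) : List (α × α) :=
  (List.range (minimalPeriod f x)).map fun k => (f^[k + 1] x, f^[k] x)

variable {f : α → α} {x : α}

theorem orbitArcs_ne_nil (hx : x ∈ periodicPts f) : orbitArcs f x ≠ [] := by
  simpa [orbitArcs] using (minimalPeriod_pos_of_mem_periodicPts hx).ne'

theorem mem_orbitArcs {p : α × α} (hp : p ∈ orbitArcs f x) : ∃ k, p = (f (f^[k] x), f^[k] x) := by
  obtain ⟨k, -, rfl⟩ := List.mem_map.1 hp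
  exact ⟨k, by rw [iterate_succ_apply']⟩

theorem nodup_orbitArcs : (orbitArcs f x).Nodup := by
  refine List.Nodup.of_map Prod.snd ?_
  rw [orbitArcs, List.map_map]
  exact List.nodup_range.map_on fun a ha b hb h =>
    iterate_injOn_Iio_minimalPeriod (List.mem_range.1 ha) (List.mem_range.1 hb) h

theorem map_fst_orbitArcs_perm :
    ((orbitArcs f x).map Prod.fst).Perm ((orbitArcs f x).map Prod.snd) := by
  set q := minimalPeriod f x
  have hrange : (List.range (q + 1)).map (f^[·] x) =
      x :: (List.range q).map (f^[· + 1] x) := by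
    rw [List.range_succ_eq_map, List.map_cons, List.map_map]
    rfl
  rw [List.range_succ, List.map_append, List.map_singleton, iterate_minimalPeriod] at hrange
  have h := List.perm_append_singleton x ((List.range q).map (f^[·] x))
  rw [hrange] at h
  rw [orbitArcs, List.map_map, List.map_map]
  exact (List.perm_cons x).1 h

end Function

namespace Pebbling

section Acyclic

variable {α : Type*}

/-- The transition digraph of `S` has no directed cycle. -/
def Acyclic (S : List (α × α)) : Prop :=
  ∀ u, ¬ Relation.TransGen (fun a b => (a, b) ∈ S) u u

theorem acyclic_nil : Acyclic ([] : List (α × α)) := fun _ h => by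
  obtain ⟨_, h, -⟩ := Relation.TransGen.head'_iff.1 h
  simp at h

theorem Acyclic.cons_of_source {S : List (α × α)} {u w : α} (h : Acyclic S)
    (hsrc : ∀ z, (z, u) ∉ S) (huw : u ≠ w) : Acyclic ((u, w) :: S) := by
  have hnot_into : ∀ c, (c, u) ∉ (u, w) :: S := fun c hc => by
    rcases List.mem_cons.1 hc with hc | hc
    · exact huw (Prod.ext_iff.1 hc).2
    · exact hsrc c hc
  have hoff : ∀ a b, Relation.TransGen (fun a b => (a, b) ∈ (u, w) :: S) a b → a ≠ u →
      Relation.TransGen (fun a b => (a, b) ∈ S) a b := by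
    have harc : ∀ a b, (a, b) ∈ (u, w) :: S → a ≠ u → (a, b) ∈ S := fun a b hab hau =>
      (List.mem_cons.1 hab).resolve_left fun h => hau (Prod.ext_iff.1 h).1
    intro a b hab
    induction hab using Relation.TransGen.head_induction_on with
    | single hab => exact fun hau => .single (harc _ _ hab hau)
    | head hac _ ih =>
      exact fun hau => .head (harc _ _ hac hau) (ih fun hcu => hnot_into _ (hcu ▸ hac))
  intro x hx
  by_cases hxu : x = u
  · obtain ⟨c, -, hc⟩ := Relation.TransGen.tail'_iff.1 hx
    exact hnot_into c (hxu ▸ hc)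
  · exact h x (hoff x x hx hxu)

end Acyclic

def outDeg (m : List (V × V)) (v : V) : ℕ := (m.map Prod.fst).count v

def inDeg (m : List (V × V)) (v : V) : ℕ := (m.map Prod.snd).count v

def MoveBalance (m : List (V × V)) (D₀ D : V → ℕ) : Prop :=
  ∀ v, D v + 2 * outDeg m v = D₀ v + inDeg m v

theorem MoveBalance.eq_of_nil {D₀ D : V → ℕ} (h : MoveBalance [] D₀ D) : D = D₀ :=
  funext fun v => by simpa [outDeg, inDeg] using h v

theorem MoveBalance.perm {m m' : List (V × V)} {D₀ D : V → ℕ} (h : MoveBalance m D₀ D)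
    (hm : m.Perm m') : MoveBalance m' D₀ D := fun v => by
  simpa only [outDeg, inDeg, (hm.map _).count_eq] using h v

theorem MoveBalance.two_le_of_source {m : List (V × V)} {D₀ D : V → ℕ} (h : MoveBalance m D₀ D)
    {u w : V} (huw : (u, w) ∈ m) (hsrc : ∀ z, (z, u) ∉ m) : 2 ≤ D₀ u := by
  have hout : 0 < outDeg m u := List.count_pos_iff.2 (List.mem_map_of_mem (f := Prod.fst) huw)
  have hin : inDeg m u = 0 :=
    List.count_eq_zero.2 fun hu => by
      obtain ⟨⟨z, _⟩, hz, rfl⟩ := List.mem_map.1 hu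
      exact hsrc z hz
  have := h u
  omega

theorem moveBalance_cons_iff {m : List (V × V)} {D₀ D : V → ℕ} {u w : V} (huw : u ≠ w)
    (h2 : 2 ≤ D₀ u) : MoveBalance ((u, w) :: m) D₀ D ↔
      MoveBalance m (fun x => if x = u then D₀ u - 2 else if x = w then D₀ w + 1 else D₀ x) D := by
  refine forall_congr' fun v => ?_
  simp only [outDeg, inDeg, List.map_cons, List.count_cons, beq_iff_eq]
  rcases eq_or_ne v u with rfl | hvu
  · simp only [if_pos, if_neg huw, if_neg huw.symm]
    omega
  rcases eq_or_ne v w with rfl | hvw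
  · simp only [if_pos, if_neg hvu, if_neg huw]
    omega
  simp only [if_neg hvu, if_neg hvw, if_neg hvu.symm, if_neg hvw.symm]
  omega

theorem MoveBalance.of_append_circulation {E r : List (V × V)} {D₀ D : V → ℕ}
    (h : MoveBalance (E ++ r) D₀ D) (hE : ∀ v, outDeg E v = inDeg E v) :
    MoveBalance r D₀ fun v => D v + outDeg E v := by
  intro v
  have hv := h v
  simp only [outDeg, inDeg, List.map_append, List.count_append] at hv hE ⊢
  have := hE v
  omega

theorem exists_circulation {m : List (V × V)} (hne : m ≠ [])
    (hpred : ∀ u w, (u, w) ∈ m → ∃ z, (z, u) ∈ m) :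
    ∃ E r : List (V × V), E ≠ [] ∧ m.Perm (E ++ r) ∧ ∀ v, outDeg E v = inDeg E v := by
  set s : Set V := ↑(m.map Prod.fst).toFinset
  have hs : ∀ {v}, v ∈ s ↔ ∃ w, (v, w) ∈ m := by simp [s]
  obtain ⟨⟨u, w⟩, huw⟩ := List.exists_mem_of_ne_nil m hne
  have : Nonempty V := ⟨u⟩
  -- a periodic orbit of this predecessor map `f` runs backwards along a directed cycle of `m`
  choose! f hf using fun v (hv : v ∈ s) => have ⟨w, hw⟩ := hs.1 hv; hpred v w hw
  have hmaps : Set.MapsTo f s s := fun v hv => hs.2 ⟨v, hf v hv⟩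
  obtain ⟨y, hy, hper⟩ := hmaps.exists_mem_periodicPts (Set.toFinite s) (hs.2 ⟨w, huw⟩)
  have hsub : orbitArcs f y ⊆ m := fun p hp => by
    obtain ⟨k, rfl⟩ := mem_orbitArcs hp
    exact hf _ (hmaps.iterate k hy)
  obtain ⟨l, hl, hlm⟩ := nodup_orbitArcs.subperm hsub
  obtain ⟨r, hr⟩ := hlm.exists_perm_append
  exact ⟨orbitArcs f y, r, orbitArcs_ne_nil hper, hr.trans (hl.append_right r),
    fun v => map_fst_orbitArcs_perm.count_eq v⟩

end Pebbling

open Pebbling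

theorem ValidSeq.adj {G : SimpleGraph V} {D₀ D : V → ℕ} {S : List (V × V)}
    (h : ValidSeq G D₀ S D) : ∀ p ∈ S, G.Adj p.1 p.2 := by
  induction h with
  | nil => simp
  | cons _ u v huv _ _ ih => exact List.forall_mem_cons.2 ⟨huv, ih⟩

theorem ValidSeq.moveBalance {G : SimpleGraph V} {D₀ D : V → ℕ} {S : List (V × V)}
    (h : ValidSeq G D₀ S D) : MoveBalance S D₀ D := by
  induction h with
  | nil => simp [MoveBalance, outDeg, inDeg]
  | cons D u v huv h2 _ ih => exact (moveBalance_cons_iff huv.ne h2).2 ih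

theorem exists_acyclic_validSeq_of_moveBalance (G : SimpleGraph V) (m : List (V × V))
    (hadj : ∀ p ∈ m, G.Adj p.1 p.2) (D₀ D : V → ℕ) (hbal : MoveBalance m D₀ D) :
    ∃ (S' : List (V × V)) (D' : V → ℕ), ValidSeq G D₀ S' D' ∧ (∀ v, D v ≤ D' v) ∧ S' ⊆ m ∧
      Acyclic S' := by
  rcases eq_or_ne m [] with rfl | hne
  · exact ⟨[], D₀, .nil D₀, fun v => (congrFun hbal.eq_of_nil v).le, List.nil_subset _,
      acyclic_nil⟩
  by_cases hsrc : ∃ u w, (u, w) ∈ m ∧ ∀ z, (z, u) ∉ m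
  · obtain ⟨u, w, huw, hsrc⟩ := hsrc
    have h2 := hbal.two_le_of_source huw hsrc
    have hlen : (m.erase (u, w)).length < m.length := by
      rw [List.length_erase_of_mem huw]
      exact Nat.pred_lt (List.length_pos_iff.2 hne).ne'
    obtain ⟨S', D', hS', hle, hsub, hac⟩ :=
      exists_acyclic_validSeq_of_moveBalance G (m.erase (u, w))
        (fun p hp => hadj p (List.mem_of_mem_erase hp)) _ D
        ((moveBalance_cons_iff (hadj _ huw).ne h2).1 (hbal.perm (List.perm_cons_erase huw)))
    refine ⟨(u, w) :: S', D', .cons D₀ u w (hadj _ huw) h2 hS', hle,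
      List.cons_subset.2 ⟨huw, List.Subset.trans hsub List.erase_subset⟩, ?_⟩
    exact hac.cons_of_source (fun z hz => hsrc z (List.mem_of_mem_erase (hsub hz)))
      (hadj _ huw).ne
  · push Not at hsrc
    obtain ⟨E, r, hEne, hr, hcirc⟩ := exists_circulation hne hsrc
    have hrm : r ⊆ m := fun p hp => hr.symm.subset (List.mem_append_right E hp)
    have hlen : r.length < m.length := by
      rw [hr.length_eq, List.length_append]
      have := List.length_pos_iff.2 hEne
      omega
    obtain ⟨S', D', hS', hle, hsub, hac⟩ :=
      exists_acyclic_validSeq_of_moveBalance G r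
        (fun p hp => hadj p (hrm hp)) D₀ _
        ((hbal.perm hr).of_append_circulation hcirc)
    exact ⟨S', D', hS', fun v => (Nat.le_add_right _ _).trans (hle v),
      List.Subset.trans hsub hrm, hac⟩
termination_by m.length

/-- No-Cycle Lemma: any sequence of pebbling moves can be replaced by one whose
transition multidigraph has no directed cycle, reaching at least as many pebbles
on every vertex. -/
theorem no_cycle_lemma (G : SimpleGraph V) (D₀ D : V → ℕ) (S : List (V × V))
    (hS : ValidSeq G D₀ S D) :
    ∃ (S' : List (V × V)) (D' : V → ℕ), ValidSeq G D₀ S' D' ∧ (∀ v, D v ≤ D' v) ∧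
      ∀ u, ¬ Relation.TransGen (fun a b => (a, b) ∈ S') u u := by
  obtain ⟨S', D', hS', hle, -, hac⟩ :=
    exists_acyclic_validSeq_of_moveBalance G S hS.adj D₀ D hS.moveBalance
  exact ⟨S', D', hS', hle, hac⟩
end

section
/- Let T be a tree, D a distribution on T, ω a nonnegative weight function, and C = D − ω the induced generalized distribution. Let v be a leaf of T with neighbor u, and define a generalized distribution C' on T \ v by: C'(u) = C(u) + ⌊C(v)/2⌋ if C(v) ≥ 0, and C'(u) = C(u) + 2C(v) if C(v) < 0, with C'(x) = C(x) for all other x. Then C is 0-solvable in T if and only if C' is 0-solvable in T \ v. -/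
open SimpleGraph Finset

variable {V : Type*} [DecidableEq V]

/-!
A sequence of moves is recorded by its flow `f`, where `f a b` counts the moves from `a` to `b`;
the moves take `C` to `C + netFlow f` in any order. Conversely, on a forest every flow with
nonnegative balance is realised by moves: after cancelling opposite moves along each edge the flow
has no directed cycle, so it has a source, and a source with nonnegative balance holds at least
two pebbles, so one of its moves can be performed first. Thus `0`-solvability means the existence
of such a flow. Deleting the leaf `v` only forgets the moves along `uv`: if `C v ≥ 0`, `v` can
send at most `⌊C v / 2⌋` pebbles to `u`; if `C v < 0`, `u` must send `-C v` pebbles to `v`,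
at a cost of `-2 C v`.
-/

open Relation

section Flow

omit [DecidableEq V]

variable {G : SimpleGraph V} {A : Set V}

def IsFlowOn (G : SimpleGraph V) (A : Set V) (f : V → V → ℕ) : Prop :=
  ∀ a b, f a b ≠ 0 → a ∈ A ∧ b ∈ A ∧ G.Adj a b

lemma IsFlowOn.add {f g : V → V → ℕ} (hf : IsFlowOn G A f) (hg : IsFlowOn G A g) :
    IsFlowOn G A (f + g) := fun a b hab => by
  by_cases h : f a b = 0
  · exact hg a b (by simpa [h] using hab)
  · exact hf a b h

lemma IsFlowOn.of_le {f g : V → V → ℕ} (hf : IsFlowOn G A f) (hgf : g ≤ f) :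
    IsFlowOn G A g := fun a b hab => hf a b fun h => hab (Nat.eq_zero_of_le_zero (h ▸ hgf a b))

lemma IsFlowOn.mono {f : V → V → ℕ} {B : Set V} (hf : IsFlowOn G A f) (hAB : A ⊆ B) :
    IsFlowOn G B f := fun a b hab =>
  let ⟨ha, hb, hadj⟩ := hf a b hab
  ⟨hAB ha, hAB hb, hadj⟩

def cancel (f : V → V → ℕ) : V → V → ℕ := fun a b => f a b - min (f a b) (f b a)

lemma cancel_le (f : V → V → ℕ) : cancel f ≤ f := fun _ _ => Nat.sub_le _ _

lemma cancel_eq_zero_or (f : V → V → ℕ) (a b : V) :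
    cancel f a b = 0 ∨ cancel f b a = 0 := by
  simp only [cancel]
  omega

variable [Fintype V]

def netFlow (f : V → V → ℕ) (x : V) : ℤ := ∑ y, (f y x : ℤ) - 2 * ∑ y, (f x y : ℤ)

lemma netFlow_add (f g : V → V → ℕ) : netFlow (f + g) = netFlow f + netFlow g := by
  funext x
  simp only [netFlow, Pi.add_apply, Nat.cast_add, Finset.sum_add_distrib]
  ring

lemma IsFlowOn.netFlow_eq_zero {f : V → V → ℕ} (hf : IsFlowOn G A f) {x : V} (hx : x ∉ A) :
    netFlow f x = 0 := by
  have hin : ∀ y, f y x = 0 := fun y => by_contra fun h => hx (hf y x h).2.1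
  have hout : ∀ y, f x y = 0 := fun y => by_contra fun h => hx (hf x y h).1
  simp [netFlow, hin, hout]

lemma netFlow_le_netFlow_cancel (f : V → V → ℕ) (x : V) :
    netFlow f x ≤ netFlow (cancel f) x := by
  set m : V → V → ℕ := fun a b => min (f a b) (f b a)
  have hf : cancel f + m = f := by
    funext a b
    simp only [cancel, m, Pi.add_apply]
    omega
  have hm : netFlow m x = -∑ y, (m x y : ℤ) := by
    simp only [netFlow, m, min_comm (f _ x)]
    ring
  have hm0 : 0 ≤ ∑ y, (m x y : ℤ) := Finset.sum_nonneg fun _ _ => by positivity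
  have := congrFun (netFlow_add (cancel f) m) x
  rw [hf, Pi.add_apply, hm] at this
  linarith

end Flow

section EdgeFlow

variable {G : SimpleGraph V} {A : Set V}

def edgeFlow (u v : V) (k : ℕ) : V → V → ℕ := fun a b => if a = u ∧ b = v then k else 0

lemma isFlowOn_edgeFlow {u v : V} (hu : u ∈ A) (hv : v ∈ A) (huv : G.Adj u v) (k : ℕ) :
    IsFlowOn G A (edgeFlow u v k) := fun a b hab => by
  obtain ⟨rfl, rfl⟩ : a = u ∧ b = v := by by_contra h; simp [edgeFlow, h] at hab
  exact ⟨hu, hv, huv⟩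

variable [Fintype V]

lemma netFlow_edgeFlow (u v : V) (k : ℕ) (x : V) :
    netFlow (edgeFlow u v k) x =
      (if x = v then (k : ℤ) else 0) - 2 * if x = u then (k : ℤ) else 0 := by
  simp only [netFlow, edgeFlow, ite_and]
  push_cast
  simp [Finset.sum_ite_eq']

lemma add_netFlow_edgeFlow_one {u v : V} (huv : u ≠ v) (C : V → ℤ) :
    C + netFlow (edgeFlow u v 1) =
      fun x => if x = u then C u - 2 else if x = v then C v + 1 else C x := by
  funext x
  rw [Pi.add_apply, netFlow_edgeFlow]
  by_cases hu : x = u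
  · subst hu; simp [huv]; ring
  · by_cases hv : x = v
    · subst hv; simp [Ne.symm huv]
    · simp [hu, hv]

lemma zStepOn_iff {C C' : V → ℤ} :
    ZStepOn G A C C' ↔ ∃ u v, u ∈ A ∧ v ∈ A ∧ G.Adj u v ∧ 2 ≤ C u ∧
      C' = C + netFlow (edgeFlow u v 1) := by
  refine exists₂_congr fun u v => and_congr_right fun _ => and_congr_right fun _ =>
    and_congr_right fun huv => and_congr_right fun _ => ?_
  rw [add_netFlow_edgeFlow_one huv.ne]

lemma exists_flow_of_reflTransGen {C C' : V → ℤ} (h : ReflTransGen (ZStepOn G A) C C') :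
    ∃ f, IsFlowOn G A f ∧ C' = C + netFlow f := by
  induction h using ReflTransGen.head_induction_on with
  | refl => exact ⟨0, fun _ _ h => absurd rfl h, by ext; simp [netFlow]⟩
  | head hstep _ ih =>
    obtain ⟨u, v, hu, hv, huv, -, rfl⟩ := zStepOn_iff.mp hstep
    obtain ⟨f, hf, rfl⟩ := ih
    exact ⟨edgeFlow u v 1 + f, (isFlowOn_edgeFlow hu hv huv 1).add hf,
      by rw [netFlow_add, add_assoc]⟩

end EdgeFlow

section Acyclic

omit [DecidableEq V]

variable {G : SimpleGraph V} {f : V → V → ℕ}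

lemma exists_walk_of_transGen (hf : ∀ a b, f a b ≠ 0 → G.Adj a b)
    (hanti : ∀ a b, f a b = 0 ∨ f b a = 0) {x y : V}
    (h : TransGen (fun a b => f a b ≠ 0) x y) :
    ∃ p : G.Walk x y, f x p.snd ≠ 0 ∧ p.edges.IsChain (· ≠ ·) := by
  induction h using TransGen.head_induction_on with
  | single hxy => exact ⟨.cons (hf _ _ hxy) .nil, by simpa using hxy, by simp⟩
  | @head x b hxb _ ih =>
    obtain ⟨q, hq, hchain⟩ := ih
    refine ⟨.cons (hf _ _ hxb) q, by simpa using hxb, ?_⟩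
    cases q with
    | nil => exact absurd rfl (hf _ _ (by simpa using hq)).ne
    | @cons _ c _ hbc q =>
      simp only [Walk.snd_cons] at hq
      rw [Walk.edges_cons, List.isChain_cons]
      refine ⟨?_, hchain⟩
      simp only [Walk.edges_cons, List.head?_cons, Option.mem_def, Option.some.injEq,
        forall_eq', ne_eq, Sym2.eq_iff]
      rintro (⟨rfl, -⟩ | ⟨rfl, -⟩)
      · exact (hf _ _ hxb).ne rfl
      · exact (hanti x b).elim hxb hq

lemma not_transGen_self (hG : G.IsAcyclic) (hf : ∀ a b, f a b ≠ 0 → G.Adj a b)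
    (hanti : ∀ a b, f a b = 0 ∨ f b a = 0) (x : V) :
    ¬TransGen (fun a b => f a b ≠ 0) x x := by
  intro h
  obtain ⟨p, hp, hchain⟩ := exists_walk_of_transGen hf hanti h
  rw [← hG.isPath_iff_isChain, Walk.isPath_iff_nil, ← Walk.eq_nil_iff_nil] at hchain
  subst hchain
  exact (hf x x (by simpa using hp)).ne rfl

lemma exists_source [Finite V] (hG : G.IsAcyclic) (hf : ∀ a b, f a b ≠ 0 → G.Adj a b)
    (hanti : ∀ a b, f a b = 0 ∨ f b a = 0) (hne : ∃ a b, f a b ≠ 0) :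
    ∃ w z, f w z ≠ 0 ∧ ∀ y, f y w = 0 := by
  have : Std.Irrefl (TransGen fun a b => f a b ≠ 0) := ⟨not_transGen_self hG hf hanti⟩
  have hwf : WellFounded fun a b => f a b ≠ 0 :=
    (Finite.wellFounded_of_trans_of_irrefl (TransGen fun a b => f a b ≠ 0)).mono
      fun _ _ h => TransGen.single h
  obtain ⟨w, ⟨z, hz⟩, hmin⟩ := hwf.has_min {w | ∃ z, f w z ≠ 0} hne
  exact ⟨w, z, hz, fun y => by_contra fun h => hmin y ⟨w, h⟩ h⟩

end Acyclic

section Solvability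

variable [Fintype V] {G : SimpleGraph V} {A : Set V}

lemma exists_add_edgeFlow_one_eq {f : V → V → ℕ} {w z : V} (hwz : f w z ≠ 0) :
    ∃ f₁, f₁ ≤ f ∧ edgeFlow w z 1 + f₁ = f ∧ ∑ a, ∑ b, f₁ a b < ∑ a, ∑ b, f a b := by
  refine ⟨fun a b => f a b - edgeFlow w z 1 a b, fun a b => Nat.sub_le _ _, ?_⟩
  have hsplit : edgeFlow w z 1 + (fun a b => f a b - edgeFlow w z 1 a b) = f := by
    funext a b
    simp only [edgeFlow, Pi.add_apply]
    split_ifs with h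
    · obtain ⟨rfl, rfl⟩ := h
      omega
    · omega
  refine ⟨hsplit, ?_⟩
  conv_rhs => rw [← hsplit]
  simp [Finset.sum_add_distrib, edgeFlow, ite_and]

omit [DecidableEq V] in
lemma two_le_of_source {f : V → V → ℕ} {w z : V} (hwz : f w z ≠ 0) (hsource : ∀ y, f y w = 0)
    {C : V → ℤ} (hw : 0 ≤ C w + netFlow f w) : 2 ≤ C w := by
  have hout : (f w z : ℤ) ≤ ∑ y, (f w y : ℤ) :=
    Finset.single_le_sum (f := fun y => (f w y : ℤ)) (fun _ _ => by positivity) (mem_univ z)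
  simp only [netFlow, hsource, Nat.cast_zero, Finset.sum_const_zero] at hw
  omega

lemma zSolvableOn_of_flow (hG : G.IsAcyclic) {f : V → V → ℕ} (hf : IsFlowOn G A f)
    (hanti : ∀ a b, f a b = 0 ∨ f b a = 0) {C : V → ℤ}
    (hC : ∀ x ∈ A, 0 ≤ C x + netFlow f x) :
    ZSolvableOn G A C := by
  induction hN : ∑ a, ∑ b, f a b using Nat.strong_induction_on generalizing C f with
  | _ N ih =>
  by_cases hne : ∃ a b, f a b ≠ 0
  swap
  · push Not at hne
    exact ⟨C, .refl, fun x hx => by simpa [netFlow, hne] using hC x hx⟩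
  obtain ⟨w, z, hwz, hsource⟩ := exists_source hG (fun a b h => (hf a b h).2.2) hanti hne
  obtain ⟨hw, hz, hadj⟩ := hf w z hwz
  obtain ⟨f₁, hf₁, hsplit, hlt⟩ := exists_add_edgeFlow_one_eq hwz
  rw [hN] at hlt
  have hC₁ : ∀ x ∈ A, 0 ≤ (C + netFlow (edgeFlow w z 1)) x + netFlow f₁ x := by
    intro x hx
    rw [Pi.add_apply, add_assoc, ← Pi.add_apply (netFlow _), ← netFlow_add, hsplit]
    exact hC x hx
  have hanti₁ : ∀ a b, f₁ a b = 0 ∨ f₁ b a = 0 := fun a b =>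
    (hanti a b).imp (fun h => by simpa [h] using hf₁ a b) fun h => by simpa [h] using hf₁ b a
  obtain ⟨C', hrun, hC'⟩ := ih _ hlt (hf.of_le hf₁) hanti₁ hC₁ rfl
  have h2 := two_le_of_source hwz hsource (hC w hw)
  exact ⟨C', .head (zStepOn_iff.mpr ⟨w, z, hw, hz, hadj, h2, rfl⟩) hrun, hC'⟩

theorem zSolvableOn_iff_exists_flow (hG : G.IsAcyclic) {C : V → ℤ} :
    ZSolvableOn G A C ↔ ∃ f, IsFlowOn G A f ∧ ∀ x ∈ A, 0 ≤ C x + netFlow f x := by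
  constructor
  · rintro ⟨C', hrun, hC'⟩
    obtain ⟨f, hf, rfl⟩ := exists_flow_of_reflTransGen hrun
    exact ⟨f, hf, hC'⟩
  · rintro ⟨f, hf, hC⟩
    exact zSolvableOn_of_flow hG (hf.of_le (cancel_le f)) (cancel_eq_zero_or f) fun x hx =>
      (hC x hx).trans (by linarith [netFlow_le_netFlow_cancel f x])

end Solvability

section Leaf

def contractLeaf (C : V → ℤ) (v u : V) : V → ℤ :=
  fun x => if x = u then C u + (if 0 ≤ C v then C v / 2 else 2 * C v) else C x

variable [Fintype V] {G : SimpleGraph V} {u v : V}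

lemma netFlow_add_edgeFlow_add_edgeFlow (huv : u ≠ v) (f : V → V → ℕ) (a b : ℕ) (x : V) :
    netFlow (f + edgeFlow v u a + edgeFlow u v b) x = netFlow f x +
      (if x = u then (a : ℤ) - 2 * b else 0) + (if x = v then (b : ℤ) - 2 * a else 0) := by
  simp only [netFlow_add, Pi.add_apply, netFlow_edgeFlow]
  by_cases hu : x = u
  · subst hu; simp [huv]; ring
  · by_cases hv : x = v
    · subst hv; simp [huv.symm]; ring
    · simp [hu, hv]

lemma exists_flow_deleteLeaf_of_flow (hleaf : ∀ z, G.Adj v z → z = u) (huv : u ≠ v)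
    {C : V → ℤ} {f : V → V → ℕ} (hf : IsFlowOn G Set.univ f)
    (hC : ∀ x, 0 ≤ C x + netFlow f x) :
    ∃ f', IsFlowOn G {x | x ≠ v} f' ∧
      ∀ x ∈ {x | x ≠ v}, 0 ≤ contractLeaf C v u x + netFlow f' x := by
  set f' : V → V → ℕ := fun a b => if a = v ∨ b = v then 0 else f a b
  have hf' : IsFlowOn G {x | x ≠ v} f' := fun a b hab => by
    simp only [f', ne_eq, ite_eq_left_iff, not_or, Classical.not_imp] at hab
    exact ⟨hab.1.1, hab.1.2, (hf a b hab.2).2.2⟩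
  have hsplit : f' + edgeFlow v u (f v u) + edgeFlow u v (f u v) = f := by
    have hout : ∀ y ≠ u, f v y = 0 := fun y hy => by_contra fun h => hy (hleaf y (hf v y h).2.2)
    have hin : ∀ y ≠ u, f y v = 0 := fun y hy =>
      by_contra fun h => hy (hleaf y (hf y v h).2.2.symm)
    funext a b
    simp only [f', edgeFlow, Pi.add_apply]
    split_ifs <;> grind
  have hv := hC v
  rw [← hsplit, netFlow_add_edgeFlow_add_edgeFlow huv, if_neg huv.symm, if_pos rfl,
    hf'.netFlow_eq_zero (by simp)] at hv
  refine ⟨f', hf', fun x (hx : x ≠ v) => ?_⟩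
  have hx' := hC x
  rw [← hsplit, netFlow_add_edgeFlow_add_edgeFlow huv, if_neg hx] at hx'
  by_cases hxu : x = u
  · subst hxu
    simp only [contractLeaf, if_true] at hx' ⊢
    split_ifs <;> omega
  · simpa [contractLeaf, hxu] using hx'

lemma exists_flow_of_flow_deleteLeaf (hvu : G.Adj v u) {C : V → ℤ} {f' : V → V → ℕ}
    (hf' : IsFlowOn G {x | x ≠ v} f')
    (hC : ∀ x ∈ {x | x ≠ v}, 0 ≤ contractLeaf C v u x + netFlow f' x) :
    ∃ f, IsFlowOn G Set.univ f ∧ ∀ x ∈ Set.univ, 0 ≤ C x + netFlow f x := by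
  -- at most one of the two transfers is nonzero, according to the sign of `C v`
  set k := (C v / 2).toNat
  set m := (-C v).toNat
  refine ⟨f' + edgeFlow v u k + edgeFlow u v m, ?_, fun x _ => ?_⟩
  · have hedge {a b : V} (hab : G.Adj a b) (n : ℕ) : IsFlowOn G Set.univ (edgeFlow a b n) :=
      isFlowOn_edgeFlow (Set.mem_univ a) (Set.mem_univ b) hab n
    exact ((hf'.mono (Set.subset_univ _)).add (hedge hvu k)).add (hedge hvu.symm m)
  rw [netFlow_add_edgeFlow_add_edgeFlow hvu.ne.symm]
  by_cases hxv : x = v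
  · rw [hxv, hf'.netFlow_eq_zero (by simp), if_neg hvu.ne, if_pos rfl]
    omega
  have hx := hC x hxv
  by_cases hxu : x = u
  · subst hxu
    simp only [contractLeaf, if_true, if_neg hxv] at hx ⊢
    split_ifs at hx <;> omega
  · simpa [contractLeaf, hxu, hxv] using hx

theorem zSolvableOn_univ_iff_deleteLeaf (hG : G.IsAcyclic) (hvu : G.Adj v u)
    (hleaf : ∀ z, G.Adj v z → z = u) (C : V → ℤ) :
    ZSolvableOn G Set.univ C ↔
      ZSolvableOn G {x | x ≠ v} (contractLeaf C v u) := by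
  rw [zSolvableOn_iff_exists_flow hG, zSolvableOn_iff_exists_flow hG]
  exact ⟨fun ⟨_, hf, hC⟩ =>
      exists_flow_deleteLeaf_of_flow hleaf hvu.ne.symm hf fun x => hC x trivial,
    fun ⟨_, hf', hC⟩ => exists_flow_of_flow_deleteLeaf hvu hf' hC⟩

end Leaf

/-- Deleting a leaf `v` (with neighbor `u`) of a tree: `C = D - ω` is `0`-solvable in `T`
iff the contracted generalized distribution `C'` is `0`-solvable in `T \ v`. -/
theorem zero_solvable_delete_leaf (T : SimpleGraph V) [Fintype V] [DecidableRel T.Adj]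
    (hT : T.IsTree) (D ω : V → ℕ) (v u : V) (hleaf : T.degree v = 1) (hadj : T.Adj v u) :
    ZSolvableOn T Set.univ (fun x => (D x : ℤ) - (ω x : ℤ)) ↔
      ZSolvableOn T {x | x ≠ v}
        (fun x =>
          if x = u then
            ((D u : ℤ) - ω u) +
              (if 0 ≤ (D v : ℤ) - ω v then ((D v : ℤ) - ω v) / 2
               else 2 * ((D v : ℤ) - ω v))
          else (D x : ℤ) - ω x) := by
  have hleaf' : ∀ z, T.Adj v z → z = u := fun z hz =>
    (degree_eq_one_iff_existsUnique_adj.mp hleaf).unique hz hadj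
  exact zSolvableOn_univ_iff_deleteLeaf hT.isAcyclic hadj hleaf' _
end

section
/- Let T be a tree with at least one vertex, D a distribution on T, and ω a nonnegative weight function on V(T). For each vertex v, let Ĉ(v) denote the integer obtained by iteratively contracting T down to {v} using the leaf-deletion rule: when deleting a leaf x with neighbor y and current value C(x), replace C(y) by C(y) + ⌊C(x)/2⌋ if C(x) ≥ 0 and by C(y) + 2C(x) if C(x) < 0, starting from C = D − ω. Then D is not ω-solvable if and only if Ĉ(v) < 0 for every vertex v ∈ V(T). -/
open SimpleGraph Finset

variable {V : Type*} [DecidableEq V]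

-- halving inequalities
lemma hf_mono {a b : ℤ} (h : a ≤ b) :
    (if 0 ≤ a then a/2 else 2*a) ≤ (if 0 ≤ b then b/2 else 2*b) := by
  split <;> split <;> omega

lemma hf_sub_two (t : ℤ) :
    (if 0 ≤ t - 2 then (t-2)/2 else 2*(t-2)) ≤ (if 0 ≤ t then t/2 else 2*t) - 1 := by
  split <;> split <;> omega

lemma hf_add_one (t : ℤ) :
    (if 0 ≤ t + 1 then (t+1)/2 else 2*(t+1)) ≤ (if 0 ≤ t then t/2 else 2*t) + 2 := by
  split <;> split <;> omega

lemma hf_nonneg {t : ℤ} (h : 0 ≤ t) : 0 ≤ (if 0 ≤ t then t/2 else 2*t) := by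
  split <;> omega

-- reach lemmas
lemma reach_subset {G : SimpleGraph V} {A B : Set V} (hAB : A ⊆ B) {C C₂ : V → ℤ}
    (h : Relation.ReflTransGen (ZStepOn G A) C C₂) :
    Relation.ReflTransGen (ZStepOn G B) C C₂ := by
  induction h with
  | refl => exact .refl
  | tail _ hstep ih =>
    obtain ⟨u, v, hu, hv, hadj, h2, rfl⟩ := hstep
    exact ih.tail ⟨u, v, hAB hu, hAB hv, hadj, h2, rfl⟩

lemma reach_outside {G : SimpleGraph V} {A : Set V} {C C₂ : V → ℤ}
    (h : Relation.ReflTransGen (ZStepOn G A) C C₂) : ∀ w ∉ A, C₂ w = C w := by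
  induction h with
  | refl => exact fun _ _ => rfl
  | tail _ hstep ih =>
    intro w hw
    obtain ⟨u, v, hu, hv, hadj, h2, rfl⟩ := hstep
    have h1 : w ≠ u := fun h => hw (h ▸ hu)
    have h2 : w ≠ v := fun h => hw (h ▸ hv)
    simp only [h1, h2, if_false]
    exact ih w hw

lemma reach_mono_add {G : SimpleGraph V} {A : Set V} {C C₂ : V → ℤ}
    (h : Relation.ReflTransGen (ZStepOn G A) C C₂) (E : V → ℤ) (hE : ∀ w ∈ A, 0 ≤ E w) :
    Relation.ReflTransGen (ZStepOn G A) (fun w => C w + E w) (fun w => C₂ w + E w) := by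
  induction h with
  | refl => exact .refl
  | tail _ hstep ih =>
    obtain ⟨u, v, hu, hv, hadj, h2, rfl⟩ := hstep
    refine ih.tail ⟨u, v, hu, hv, hadj, by have := hE u hu; dsimp only; omega, ?_⟩
    have hne := hadj.ne
    funext z
    by_cases hz : z = u
    · subst hz; simp
      ring
    · by_cases hz2 : z = v
      · subst hz2
        simp [hadj.ne']
        ring
      · simp [hz, hz2]

lemma reach_moves {G : SimpleGraph V} {A : Set V} {u v : V}
    (hu : u ∈ A) (hv : v ∈ A) (hadj : G.Adj u v) (k : ℕ) :
    ∀ C : V → ℤ, 2 * (k : ℤ) ≤ C u → Relation.ReflTransGen (ZStepOn G A) C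
      (fun x => if x = u then C u - 2 * k else if x = v then C v + k else C x) := by
  have hne : u ≠ v := hadj.ne
  induction k with
  | zero =>
    intro C _
    have : (fun x => if x = u then C u - 2 * (0:ℕ) else if x = v then C v + (0:ℕ) else C x) = C := by
      funext x; split_ifs with h1 h2
      · subst h1; simp
      · subst h2; simp
      · rfl
    rw [this]
  | succ k ih =>
    intro C hC
    have hstep : ZStepOn G A C (fun x => if x = u then C u - 2 else if x = v then C v + 1 else C x) :=
      ⟨u, v, hu, hv, hadj, by push_cast at hC; omega, rfl⟩
    refine Relation.ReflTransGen.head hstep ?_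
    have := ih (fun x => if x = u then C u - 2 else if x = v then C v + 1 else C x)
      (by simp only [if_pos rfl]; push_cast at hC ⊢; omega)
    convert this using 1
    funext x
    by_cases hx : x = u
    · subst hx
      simp only [if_pos rfl]
      push_cast; ring
    · by_cases hx2 : x = v
      · subst hx2
        simp only [if_neg hx, if_pos rfl, if_neg (hadj.ne' : x ≠ u)]
        push_cast; ring
      · simp [hx, hx2]

lemma contract_mono {G : SimpleGraph V} {s₀ s₁ : Finset V} {C₀ C₁ : V → ℤ}
    (h : Contract G s₀ C₀ s₁ C₁) :
    ∀ Cb : V → ℤ, (∀ w ∈ s₀, Cb w ≤ C₀ w) →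
      ∃ Cb', Contract G s₀ Cb s₁ Cb' ∧ ∀ w ∈ s₁, Cb' w ≤ C₁ w := by
  induction h with
  | refl s C => exact fun Cb hb => ⟨Cb, .refl _ _, hb⟩
  | @step s C x y hx hy hadj hleaf s' C' h ih =>
    intro Cb hb
    have hb' : ∀ w ∈ s.erase x,
        (if w = y then Cb y + (if 0 ≤ Cb x then Cb x / 2 else 2 * Cb x) else Cb w)
          ≤ (if w = y then C y + (if 0 ≤ C x then C x / 2 else 2 * C x) else C w) := by
      intro w hw
      by_cases hwy : w = y
      · subst hwy
        simp only [if_pos rfl]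
        exact add_le_add (hb _ hy) (hf_mono (hb _ hx))
      · simp only [if_neg hwy]
        exact hb w (mem_of_mem_erase hw)
    obtain ⟨Cb', h1, h2⟩ := ih _ hb'
    exact ⟨Cb', .step x y hx hy hadj hleaf h1, h2⟩

lemma contract_nonneg {G : SimpleGraph V} {s₀ s₁ : Finset V} {C₀ C₁ : V → ℤ}
    (h : Contract G s₀ C₀ s₁ C₁) (h0 : ∀ w ∈ s₀, 0 ≤ C₀ w) : ∀ w ∈ s₁, 0 ≤ C₁ w := by
  induction h with
  | refl s C => exact h0
  | @step s C x y hx hy hadj hleaf s' C' h ih =>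
    refine ih ?_
    intro w hw
    by_cases hwy : w = y
    · subst hwy
      simp only [if_pos rfl]
      have h1 := h0 _ hx
      have h2 := h0 _ hy
      split <;> omega
    · simp only [if_neg hwy]
      exact h0 w (mem_of_mem_erase hw)

lemma contract_step {G : SimpleGraph V} {s₀ s₁ : Finset V} {C₀ C₁ : V → ℤ}
    (h : Contract G s₀ C₀ s₁ C₁) :
    ∀ u v, u ∈ s₀ → v ∈ s₀ → G.Adj u v →
      ∃ Cb', Contract G s₀
          (fun w => if w = u then C₀ u - 2 else if w = v then C₀ v + 1 else C₀ w) s₁ Cb' ∧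
        ((u ∈ s₁ ∧ v ∈ s₁ ∧
            Cb' = fun w => if w = u then C₁ u - 2 else if w = v then C₁ v + 1 else C₁ w)
          ∨ ∀ w ∈ s₁, Cb' w ≤ C₁ w) := by
  induction h with
  | refl s C => exact fun u v hu hv _ => ⟨_, .refl _ _, .inl ⟨hu, hv, rfl⟩⟩
  | @step s C x y hx hy hadj hleaf s' C' h ih =>
    intro u v hu hv huv
    have hxy : x ≠ y := hadj.ne
    by_cases hxu : x = u
    · subst hxu
      have hvy : v = y := hleaf v hv huv
      subst hvy
      set Cm : V → ℤ := fun w => if w = x then C x - 2 else if w = v then C v + 1 else C w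
        with hCm
      have hb : ∀ w ∈ s.erase x,
          (if w = v then Cm v + (if 0 ≤ Cm x then Cm x / 2 else 2 * Cm x) else Cm w)
            ≤ (if w = v then C v + (if 0 ≤ C x then C x / 2 else 2 * C x) else C w) := by
        intro w hw
        by_cases hwv : w = v
        · subst hwv
          have hCmx : Cm x = C x - 2 := by simp [hCm]
          have hCmv : Cm w = C w + 1 := by simp [hCm, Ne.symm hxy]
          rw [if_pos rfl, if_pos rfl, hCmx, hCmv]
          have := hf_sub_two (C x)
          omega
        · have hwx : w ≠ x := (Finset.mem_erase.mp hw).1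
          simp only [if_neg hwv, hCm, if_neg hwx]
          exact le_rfl
      obtain ⟨Cb', h1, h2⟩ := contract_mono h _ hb
      exact ⟨Cb', .step x v hx hy huv hleaf h1, .inr h2⟩
    · by_cases hxv : x = v
      · subst hxv
        have huy : u = y := hleaf u hu huv.symm
        subst huy
        set Cm : V → ℤ := fun w => if w = u then C u - 2 else if w = x then C x + 1 else C w
          with hCm
        have hb : ∀ w ∈ s.erase x,
            (if w = u then Cm u + (if 0 ≤ Cm x then Cm x / 2 else 2 * Cm x) else Cm w)
              ≤ (if w = u then C u + (if 0 ≤ C x then C x / 2 else 2 * C x) else C w) := by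
          intro w hw
          by_cases hwu : w = u
          · subst hwu
            have hCmx : Cm x = C x + 1 := by simp [hCm, hxy]
            have hCmu : Cm w = C w - 2 := by simp [hCm]
            rw [if_pos rfl, if_pos rfl, hCmx, hCmu]
            have := hf_add_one (C x)
            omega
          · have hwx : w ≠ x := (Finset.mem_erase.mp hw).1
            simp only [if_neg hwu, hCm, if_neg hwx]
            exact le_rfl
        obtain ⟨Cb', h1, h2⟩ := contract_mono h _ hb
        exact ⟨Cb', .step x u hx hy hadj hleaf h1, .inr h2⟩
      · have hu' : u ∈ s.erase x := Finset.mem_erase.mpr ⟨fun hh => hxu hh.symm, hu⟩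
        have hv' : v ∈ s.erase x := Finset.mem_erase.mpr ⟨fun hh => hxv hh.symm, hv⟩
        obtain ⟨Cb', h1, hdisj⟩ := ih u v hu' hv' huv
        refine ⟨Cb', .step x y hx hy hadj hleaf ?_, hdisj⟩
        convert h1 using 1
        clear ih hdisj h1 h hleaf
        funext w
        by_cases hwy : w = y <;> by_cases hwu : w = u <;> by_cases hwv : w = v <;>
          simp_all <;> ring

lemma tree_parent {T : SimpleGraph V} (hT : T.IsTree) {v x : V} (hxv : x ≠ v) :
    ∃ y, T.Adj x y ∧ T.dist v y + 1 = T.dist v x ∧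
      ∀ z, T.Adj x z → T.dist v z ≤ T.dist v x → z = y := by
  have hconn := hT.isConnected
  have hd : 0 < T.dist v x := hconn.pos_dist_of_ne (Ne.symm hxv)
  obtain ⟨p, hp⟩ := hconn.exists_walk_length_eq_dist v x
  -- extract the penultimate vertex
  rcases hrev : p.reverse with _ | ⟨hadj, q⟩
  · exfalso
    have h0 : p.length = 0 := by simpa using congrArg SimpleGraph.Walk.length hrev
    omega
  · rename_i y
    -- hadj : T.Adj x y, q : T.Walk y v
    have hq : q.length = T.dist v x - 1 := by
      have h0 : p.length = q.length + 1 := by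
        simpa using congrArg SimpleGraph.Walk.length hrev
      omega
    have hyle : T.dist v y ≤ T.dist v x - 1 := by
      have := SimpleGraph.dist_le q.reverse
      rw [SimpleGraph.Walk.length_reverse, hq] at this
      exact this
    have hyge : T.dist v x ≤ T.dist v y + 1 := by
      obtain ⟨wy, hwy⟩ := hconn.exists_walk_length_eq_dist v y
      have h1 := SimpleGraph.dist_le (wy.concat hadj.symm)
      rw [SimpleGraph.Walk.length_concat, hwy] at h1
      exact h1
    have hdy : T.dist v y + 1 = T.dist v x := by omega
    -- key claim: any z adjacent to x with dist v z ≤ dist v x equals y.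
    -- We show: for any such z, there is a path from v to x whose penultimate vertex is z;
    -- by uniqueness of paths in a tree, all such z agree.
    have key : ∀ z, T.Adj x z → T.dist v z ≤ T.dist v x →
        ∃ (pz : T.Walk v z), pz.IsPath ∧ x ∉ pz.support ∧ pz.length ≤ T.dist v x := by
      intro z hz hzd
      obtain ⟨wz, hwz⟩ := hconn.exists_walk_length_eq_dist v z
      refine ⟨wz.bypass, wz.bypass_isPath, ?_, ?_⟩
      · intro hmem
        have ht : T.dist v x ≤ (wz.bypass.takeUntil x hmem).length :=
          SimpleGraph.dist_le _
        have hsum : (wz.bypass.takeUntil x hmem).length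
            + (wz.bypass.dropUntil x hmem).length = wz.bypass.length := by
          have := congrArg SimpleGraph.Walk.length (wz.bypass.take_spec hmem)
          rwa [SimpleGraph.Walk.length_append] at this
        have hbl : wz.bypass.length ≤ T.dist v z := hwz ▸ wz.length_bypass_le
        have hdrop : (wz.bypass.dropUntil x hmem).length = 0 := by omega
        have hxz : x = z := SimpleGraph.Walk.eq_of_length_eq_zero hdrop
        exact hz.ne hxz
      · calc wz.bypass.length ≤ wz.length := wz.length_bypass_le
          _ = T.dist v z := hwz
          _ ≤ T.dist v x := hzd
    refine ⟨y, hadj, hdy, ?_⟩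
    intro z hz hzd
    by_contra hne
    obtain ⟨py, hpy, hpx, _⟩ := key y hadj (by omega)
    obtain ⟨pz, hpz, hpzx, _⟩ := key z hz hzd
    have hP1 : (py.concat hadj.symm).IsPath := by
      rw [← SimpleGraph.Walk.isPath_reverse_iff, SimpleGraph.Walk.reverse_concat]
      refine SimpleGraph.Walk.IsPath.cons hpy.reverse ?_
      rw [SimpleGraph.Walk.support_reverse, List.mem_reverse]
      exact hpx
    have hP2 : (pz.concat hz.symm).IsPath := by
      rw [← SimpleGraph.Walk.isPath_reverse_iff, SimpleGraph.Walk.reverse_concat]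
      refine SimpleGraph.Walk.IsPath.cons hpz.reverse ?_
      rw [SimpleGraph.Walk.support_reverse, List.mem_reverse]
      exact hpzx
    have := hT.IsAcyclic.path_unique ⟨py.concat hadj.symm, hP1⟩ ⟨pz.concat hz.symm, hP2⟩
    have heq : py.concat hadj.symm = pz.concat hz.symm := congrArg Subtype.val this
    obtain ⟨hyz, -⟩ := SimpleGraph.Walk.concat_inj heq
    exact hne hyz.symm

lemma contract_exists_aux {T : SimpleGraph V} (hT : T.IsTree) (v : V) :
    ∀ (n : ℕ) (s : Finset V), s.card = n → v ∈ s →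
      (∀ x ∈ s, ∀ y : V, T.Adj x y → T.dist v y + 1 = T.dist v x → y ∈ s) →
      ∀ C : V → ℤ, ∃ C', Contract T s C {v} C' := by
  intro n
  induction n with
  | zero => intro s hcard hv _ _; exact absurd (Finset.card_pos.mpr ⟨v, hv⟩) (by omega)
  | succ n ih =>
    intro s hcard hv hinv C
    by_cases hs : s = {v}
    · subst hs; exact ⟨C, .refl _ _⟩
    · have hne : (s.erase v).Nonempty := by
        rw [Finset.nonempty_iff_ne_empty]
        intro hemp
        apply hs
        apply Finset.eq_singleton_iff_unique_mem.mpr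
        refine ⟨hv, fun w hw => ?_⟩
        by_contra hwv
        exact absurd (Finset.mem_erase.mpr ⟨hwv, hw⟩) (by simp [hemp])
      obtain ⟨x, hxs, hmax⟩ := (s.erase v).exists_max_image (fun a => T.dist v a) hne
      have hxs' : x ∈ s := Finset.mem_of_mem_erase hxs
      have hxv : x ≠ v := Finset.ne_of_mem_erase hxs
      obtain ⟨y, hadj, hdist, huniq⟩ := tree_parent hT hxv
      have hy : y ∈ s := hinv x hxs' y hadj hdist
      have hleaf : ∀ z ∈ s, T.Adj x z → z = y := by
        intro z hzs hadjz
        apply huniq z hadjz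
        by_cases hzv : z = v
        · subst hzv
          rw [SimpleGraph.dist_self]
          exact Nat.zero_le _
        · exact hmax z (Finset.mem_erase.mpr ⟨hzv, hzs⟩)
      have hinv' : ∀ w ∈ s.erase x, ∀ y' : V, T.Adj w y' → T.dist v y' + 1 = T.dist v w →
          y' ∈ s.erase x := by
        intro w hw y' hadj' hdist'
        have hws : w ∈ s := Finset.mem_of_mem_erase hw
        have hy's : y' ∈ s := hinv w hws y' hadj' hdist'
        refine Finset.mem_erase.mpr ⟨?_, hy's⟩
        intro hy'x
        subst hy'x
        have hwv : w ≠ v := by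
          intro hwv
          rw [hwv, SimpleGraph.dist_self] at hdist'
          omega
        have := hmax w (Finset.mem_erase.mpr ⟨hwv, hws⟩)
        omega
      have hcard' : (s.erase x).card = n := by
        rw [Finset.card_erase_of_mem hxs']
        omega
      have hvx : v ∈ s.erase x := Finset.mem_erase.mpr ⟨Ne.symm hxv, hv⟩
      obtain ⟨C', hC'⟩ := ih (s.erase x) hcard' hvx hinv'
        (fun w => if w = y then C y + (if 0 ≤ C x then C x / 2 else 2 * C x) else C w)
      exact ⟨C', .step x y hxs' hy hadj hleaf hC'⟩

lemma contract_exists {T : SimpleGraph V} [Fintype V] (hT : T.IsTree) (v : V) (C : V → ℤ) :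
    ∃ C', Contract T Finset.univ C {v} C' :=
  contract_exists_aux hT v _ Finset.univ rfl (Finset.mem_univ v)
    (fun _ _ _ _ _ => Finset.mem_univ _) C

lemma contract_solvable {G : SimpleGraph V} {s₀ s₁ : Finset V} {C₀ C₁ : V → ℤ}
    (h : Contract G s₀ C₀ s₁ C₁) (hs : ZSolvableOn G ↑s₁ C₁) : ZSolvableOn G ↑s₀ C₀ := by
  induction h with
  | refl s C => exact hs
  | @step s C x y hx hy hadj hleaf s' C' h ih =>
    obtain ⟨C₂, hreach, hC₂⟩ := ih hs
    have hxy : x ≠ y := hadj.ne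
    have hsub : (↑(s.erase x) : Set V) ⊆ ↑s := by
      intro w hw
      exact Finset.mem_coe.mpr (Finset.mem_of_mem_erase (Finset.mem_coe.mp hw))
    have hxns : x ∉ (↑(s.erase x) : Set V) := by simp
    have hxC₂ : C₂ x = C x := by
      have := reach_outside hreach x hxns
      simpa [hxy] using this
    by_cases hpos : 0 ≤ C x
    · -- move ⌊C x / 2⌋ pebbles from x to y first
      set k : ℕ := (C x / 2).toNat with hk
      have hkz : (k : ℤ) = C x / 2 := Int.toNat_of_nonneg (Int.ediv_nonneg hpos (by norm_num))
      have hmoves := reach_moves (Finset.mem_coe.mpr hx) (Finset.mem_coe.mpr hy) hadj k C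
        (by omega)
      -- the result of the moves equals the contracted distribution plus E
      set E : V → ℤ := fun w => if w = x then -(2 * (k:ℤ)) else 0 with hE
      have hEnn : ∀ w ∈ (↑(s.erase x) : Set V), 0 ≤ E w := by
        intro w hw
        have hwx : w ≠ x := by
          intro hh; subst hh; exact hxns hw
        simp [hE, hwx]
      have hreach2 := reach_mono_add hreach E hEnn
      have hmid : (fun w => (if w = y then C y + (if 0 ≤ C x then C x / 2 else 2 * C x) else C w)
            + E w)
          = fun w => if w = x then C x - 2 * (k:ℤ) else if w = y then C y + (k:ℤ) else C w := by
        funext w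
        by_cases hwx : w = x
        · subst hwx; simp [hE, hxy]; ring
        · by_cases hwy : w = y
          · subst hwy; simp [hE, hwx, hpos, hkz.symm]
          · simp [hE, hwx, hwy]
      rw [hmid] at hreach2
      refine ⟨fun w => C₂ w + E w, ?_, ?_⟩
      · exact hmoves.trans (reach_subset hsub hreach2)
      · intro w hw
        by_cases hwx : w = x
        · subst hwx
          simp only [hE, if_pos rfl, hxC₂]
          omega
        · have : 0 ≤ C₂ w := hC₂ w (Finset.mem_coe.mpr
            (Finset.mem_erase.mpr ⟨hwx, Finset.mem_coe.mp hw⟩))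
          simp [hE, hwx]
          omega
    · -- deficient leaf: solve with extra burden on y, then send pebbles back to x
      set m : ℕ := (-C x).toNat with hm
      have hmz : (m : ℤ) = -C x := Int.toNat_of_nonneg (by omega)
      set E : V → ℤ := fun w => if w = y then 2 * (m:ℤ) else 0 with hE
      have hEnn : ∀ w ∈ (↑(s.erase x) : Set V), 0 ≤ E w := by
        intro w hw
        by_cases hwy : w = y
        · subst hwy; simp [hE]
        · simp [hE, hwy]
      have hreach2 := reach_mono_add hreach E hEnn
      have hmid : (fun w => (if w = y then C y + (if 0 ≤ C x then C x / 2 else 2 * C x) else C w)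
            + E w) = C := by
        funext w
        by_cases hwy : w = y
        · subst hwy; simp [hE, hpos]; omega
        · simp [hE, hwy]
      rw [hmid] at hreach2
      have hyC₂ : 0 ≤ C₂ y := hC₂ y (Finset.mem_coe.mpr (Finset.mem_erase.mpr ⟨Ne.symm hxy, hy⟩))
      have hmoves := reach_moves (Finset.mem_coe.mpr hy) (Finset.mem_coe.mpr hx) hadj.symm m
        (fun w => C₂ w + E w) (by simp [hE]; omega)
      refine ⟨_, (reach_subset hsub hreach2).trans hmoves, ?_⟩
      intro w hw
      by_cases hwy : w = y
      · subst hwy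
        simp only [if_pos rfl, hE]
        simp [hxy.symm]
        omega
      · by_cases hwx : w = x
        · subst hwx
          simp only [if_neg hwy, if_pos rfl, hE, hxC₂]
          simp [hxy]
          omega
        · simp only [if_neg hwy, if_neg hwx, hE, if_neg hwy]
          have : 0 ≤ C₂ w := hC₂ w (Finset.mem_coe.mpr
            (Finset.mem_erase.mpr ⟨hwx, Finset.mem_coe.mp hw⟩))
          simp [hwy]
          omega

/-- Transfer a sequence of integer moves to a sequence of pebbling moves. -/
lemma zreach_to_peb {T : SimpleGraph V} (ω : V → ℕ) :
    ∀ {C C₂ : V → ℤ}, Relation.ReflTransGen (ZStepOn T Set.univ) C C₂ →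
    (∀ x, 0 ≤ C x + ω x) →
    ∃ D₂ : V → ℕ, PebReach T (fun x => (C x + ω x).toNat) D₂ ∧ ∀ x, (D₂ x : ℤ) = C₂ x + ω x := by
  intro C C₂ h
  induction h with
  | refl =>
    intro h0
    exact ⟨_, Relation.ReflTransGen.refl, fun x => Int.toNat_of_nonneg (h0 x)⟩
  | @tail b c _ hstep ih =>
    intro h0
    obtain ⟨D₂, hr, hrepr⟩ := ih h0
    obtain ⟨u, v, -, -, hadj, h2, rfl⟩ := hstep
    have h2' : 2 ≤ D₂ u := by have := hrepr u; omega
    refine ⟨fun x => if x = u then D₂ u - 2 else if x = v then D₂ v + 1 else D₂ x,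
      hr.tail ⟨u, v, hadj, h2', rfl⟩, ?_⟩
    intro x
    by_cases hx : x = u
    · subst hx
      have := hrepr x
      simp only [if_pos rfl]
      push_cast
      omega
    · by_cases hx2 : x = v
      · subst hx2
        have := hrepr x
        simp only [if_neg hx, if_pos rfl]
        push_cast
        omega
      · have := hrepr x
        simp only [if_neg hx, if_neg hx2]
        omega

/-- Pebbling moves never increase the contracted value at a vertex. -/
lemma peb_decrease {T : SimpleGraph V} [Fintype V] {ω : V → ℕ} {r : V} :
    ∀ {D D₂ : V → ℕ}, PebReach T D D₂ →
      ∀ C', Contract T Finset.univ (fun x => (D x : ℤ) - ω x) {r} C' →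
      ∃ C₂', Contract T Finset.univ (fun x => (D₂ x : ℤ) - ω x) {r} C₂' ∧ C₂' r ≤ C' r := by
  intro D D₂ h
  induction h using Relation.ReflTransGen.head_induction_on with
  | refl => exact fun C' hc => ⟨C', hc, le_rfl⟩
  | @head a b hstep _ ih =>
    intro C' hc
    obtain ⟨u, v, hadj, h2, rfl⟩ := hstep
    obtain ⟨Cb', hcb, hdisj⟩ := contract_step hc u v (Finset.mem_univ u) (Finset.mem_univ v) hadj
    have heq : (fun x => ((if x = u then a u - 2 else if x = v then a v + 1 else a x : ℕ) : ℤ) - ω x)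
        = fun x => if x = u then ((a u : ℤ) - ω u) - 2
            else if x = v then ((a v : ℤ) - ω v) + 1 else (a x : ℤ) - ω x := by
      funext x
      by_cases hx : x = u
      · subst hx
        simp only [if_pos rfl, eq_self_iff_true, if_true]
        omega
      · by_cases hx2 : x = v
        · subst hx2
          simp only [if_neg hx, if_pos rfl, eq_self_iff_true, if_true]
          push_cast
          ring
        · simp only [if_neg hx, if_neg hx2]
    rw [← heq] at hcb
    obtain ⟨C₂', h1', h2'⟩ := ih Cb' hcb
    refine ⟨C₂', h1', le_trans h2' ?_⟩
    rcases hdisj with ⟨hu', hv', -⟩ | hle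
    · exact absurd (Finset.mem_singleton.mp hu' ▸ Finset.mem_singleton.mp hv' ▸ rfl : u = v)
        hadj.ne
    · exact hle r (Finset.mem_singleton_self r)

/-- `D` is not `ω`-solvable on a tree iff the iterated leaf-contraction value `Ĉ(v)`
is negative for every vertex `v`. -/
theorem not_solvable_iff_contractions_neg (T : SimpleGraph V) [Fintype V] [Nonempty V]
    (hT : T.IsTree) (D ω : V → ℕ) :
    ¬ Solvable T ω D ↔
      ∀ v : V, ∀ C' : V → ℤ,
        Contract T Finset.univ (fun x => (D x : ℤ) - (ω x : ℤ)) {v} C' → C' v < 0 := by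
  constructor
  · intro hns v C' hcon
    by_contra hge
    push_neg at hge
    apply hns
    have hz1 : ZSolvableOn T ↑({v} : Finset V) C' := by
      refine ⟨C', Relation.ReflTransGen.refl, ?_⟩
      intro x hx
      rw [Finset.coe_singleton, Set.mem_singleton_iff] at hx
      subst hx
      exact hge
    have hz : ZSolvableOn T ↑(Finset.univ : Finset V) (fun x => (D x : ℤ) - ω x) :=
      contract_solvable hcon hz1
    rw [Finset.coe_univ] at hz
    obtain ⟨C₂, hreach, hC₂⟩ := hz
    obtain ⟨D₂, hD₂, hrepr⟩ := zreach_to_peb ω hreach (fun x => by omega)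
    have hD : (fun x => ((D x : ℤ) - ω x + ω x).toNat) = D := by
      funext x
      omega
    rw [hD] at hD₂
    refine ⟨D₂, hD₂, fun w => ?_⟩
    have h1 := hrepr w
    have h2 := hC₂ w (Set.mem_univ w)
    omega
  · intro hall hsolv
    obtain ⟨D', hreach, hge⟩ := hsolv
    obtain ⟨v₀⟩ := ‹Nonempty V›
    obtain ⟨C', hc⟩ := contract_exists hT v₀ (fun x => (D x : ℤ) - ω x)
    obtain ⟨C₂', hc₂, hle⟩ := peb_decrease hreach C' hc
    have hneg : C' v₀ < 0 := hall v₀ C' hc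
    have h0 : ∀ w ∈ (Finset.univ : Finset V), 0 ≤ (D' w : ℤ) - ω w := by
      intro w _
      have := hge w
      omega
    have := contract_nonneg hc₂ h0 v₀ (Finset.mem_singleton_self v₀)
    omega
end

section
/- Let T be a tree, ω a nonnegative weight function, and D a distribution on T that is not ω-solvable with |D| = γ_ω(T) − 1. Then for every non-leaf vertex x of T there exists a neighbor y of x such that C_x(y) ≥ 0, where C_x denotes the induced generalized distribution (obtained from D − ω by iterated leaf-contraction) on the star T_x consisting of x and all its neighbors. -/
open SimpleGraph Finset

variable {V : Type*} [DecidableEq V]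

/-!
Call a generalized distribution `C` feasible on `s` if pebbles can be sent along edges inside
`s`, all at once, so that every vertex of `s` ends up nonnegative. Feasibility is unchanged by a
leaf contraction (a leaf with `c ≥ 0` is worth `⌊c/2⌋` to its neighbour, one with `c < 0` costs
it `-2c`), and on a tree it is equivalent to solvability: solve the leaves one at a time, in order
of decreasing distance from a root. Hence a distribution is `ω`-solvable iff its induced
distribution `C` on the star of `x` satisfies `C x + ∑ leafGain (C y) ≥ 0`. The same induction
shows that every large enough distribution is solvable, so `γ_ω(T)` is attained.

If every neighbour of `x` had `C y < 0`, with `S = ∑ C y`, then `C x + 2S < 0` as `D` is not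
solvable, while `C x + 1 + 2S ≥ 0` because adding a pebble at `x` gives `γ_ω(T)` pebbles; so
`C x = -1 - 2S`. For the largest `C j`, `S ≤ 2 C j`, hence `C x ≥ 3`. Moving the `C x` spare
pebbles of `x` to `j` and adding one more pebble there again gives `γ_ω(T)` pebbles, but the
new star value is `S - 2 C j + ⌊C j / 2⌋ < 0`, a contradiction.
-/

def leafGain (c : ℤ) : ℤ := if 0 ≤ c then c / 2 else 2 * c

/-- The distribution produced by a step of `Contract` deleting the leaf `x` attached to `y`. -/
def leafContraction (C : V → ℤ) (x y : V) : V → ℤ :=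
  fun w => if w = y then C y + leafGain (C x) else C w

structure IsLeafIn (G : SimpleGraph V) (s : Finset V) (u y : V) : Prop where
  mem : u ∈ s
  mem_neighbor : y ∈ s
  adj : G.Adj u y
  eq_of_adj : ∀ z ∈ s, G.Adj u z → z = y

/-- `m w v` pebbles arrive at `v` from `w`, each costing `w` two. -/
def netInflow (m : V → V → ℕ) (s : Finset V) (v : V) : ℤ :=
  ∑ w ∈ s, (m w v : ℤ) - 2 * ∑ w ∈ s, (m v w : ℤ)

/-- Pebble transfers along edges, all performed at once (so that no intermediate distribution
needs to be nonnegative), make `C` nonnegative on `s`. -/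
def Feasible (G : SimpleGraph V) (s : Finset V) (C : V → ℤ) : Prop :=
  ∃ m : V → V → ℕ, (∀ u v, m u v ≠ 0 → G.Adj u v) ∧
    ∀ v ∈ s, 0 ≤ C v + netInflow m s v

lemma leafGain_eq (c : ℤ) : leafGain c = ((c / 2).toNat : ℤ) - 2 * (-c).toNat := by
  unfold leafGain; split_ifs <;> omega

/-- A leaf with value `c` that sends `a` pebbles to its neighbour and receives `b` from it is
worth at most `leafGain c` to the neighbour. -/
lemma sub_two_mul_le_leafGain {c a b : ℤ} (ha : 0 ≤ a) (hb : 0 ≤ b)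
    (h : 0 ≤ c + (b - 2 * a)) : a - 2 * b ≤ leafGain c := by
  unfold leafGain; split_ifs <;> omega

lemma netInflow_eq_add_erase (m : V → V → ℕ) {s : Finset V} {u : V} (hu : u ∈ s) (v : V) :
    netInflow m s v = (m u v - 2 * m v u) + netInflow m (s.erase u) v := by
  simp only [netInflow, ← add_sum_erase s _ hu]
  ring

section Feasible

variable {G : SimpleGraph V} {s : Finset V} {C C' : V → ℤ} {u y : V}

omit [DecidableEq V] in
lemma Feasible.mono (h : Feasible G s C) (hle : ∀ v ∈ s, C v ≤ C' v) : Feasible G s C' := by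
  obtain ⟨m, hm, hC⟩ := h
  exact ⟨m, hm, fun v hv => (hC v hv).trans (by linarith [hle v hv])⟩

omit [DecidableEq V] in
lemma feasible_singleton_iff {r : V} : Feasible G {r} C ↔ 0 ≤ C r := by
  have hloop (m : V → V → ℕ) (hm : ∀ u v, m u v ≠ 0 → G.Adj u v) : m r r = 0 :=
    by_contra fun h => (hm r r h).ne rfl
  constructor
  · rintro ⟨m, hm, hC⟩
    simpa [netInflow, hloop m hm] using hC r (mem_singleton_self r)
  · exact fun h => ⟨0, fun _ _ h => absurd rfl h, by simpa [netInflow]⟩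

omit [DecidableEq V] in
lemma IsLeafIn.netInflow_self (hu : IsLeafIn G s u y) {m : V → V → ℕ}
    (hm : ∀ u v, m u v ≠ 0 → G.Adj u v) : netInflow m s u = m y u - 2 * m u y := by
  have hzero (w : V) (hw : w ∈ s) (hwy : w ≠ y) : m w u = 0 ∧ m u w = 0 :=
    ⟨by_contra fun h => hwy (hu.eq_of_adj w hw (hm w u h).symm),
      by_contra fun h => hwy (hu.eq_of_adj w hw (hm u w h))⟩
  have hin : ∑ w ∈ s, (m w u : ℤ) = m y u := sum_eq_single_of_mem y hu.mem_neighbor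
    fun w hw hwy => by simp [(hzero w hw hwy).1]
  have hout : ∑ w ∈ s, (m u w : ℤ) = m u y := sum_eq_single_of_mem y hu.mem_neighbor
    fun w hw hwy => by simp [(hzero w hw hwy).2]
  rw [netInflow, hin, hout]

lemma IsLeafIn.feasible_erase (hu : IsLeafIn G s u y) (h : Feasible G s C) :
    Feasible G (s.erase u) (leafContraction C u y) := by
  obtain ⟨m, hm, hC⟩ := h
  refine ⟨m, hm, fun v hv => ?_⟩
  have hvs := hC v (mem_of_mem_erase hv)
  rw [netInflow_eq_add_erase m hu.mem v] at hvs
  by_cases hvy : v = y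
  · subst hvy
    have hus := hC u hu.mem
    rw [hu.netInflow_self hm] at hus
    have := sub_two_mul_le_leafGain (m u v).cast_nonneg (m v u).cast_nonneg hus
    simp only [leafContraction, ↓reduceIte]
    linarith
  · have hvs' := mem_of_mem_erase hv
    have huv : m u v = 0 := by_contra fun h => hvy (hu.eq_of_adj v hvs' (hm u v h))
    have hvu : m v u = 0 := by_contra fun h => hvy (hu.eq_of_adj v hvs' (hm v u h).symm)
    simpa [leafContraction, hvy, huv, hvu] using hvs

/-- The leaf `u` sends `⌊C u / 2⌋` pebbles to `y` if `C u ≥ 0`, and receives `-C u` from `y`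
otherwise. -/
lemma IsLeafIn.feasible_of_erase (hu : IsLeafIn G s u y)
    (h : Feasible G (s.erase u) (leafContraction C u y)) : Feasible G s C := by
  obtain ⟨m, hm, hC⟩ := h
  set a := (C u / 2).toNat
  set b := (-C u).toNat
  let m' : V → V → ℕ := fun w v =>
    if w = u then (if v = y then a else 0) else if v = u then (if w = y then b else 0) else m w v
  have huy : u ≠ y := hu.adj.ne
  have hm' : ∀ w v, m' w v ≠ 0 → G.Adj w v := by
    intro w v h
    simp only [m'] at h
    split_ifs at h with h1 h2 h3 h4 <;> subst_vars
    exacts [hu.adj, absurd rfl h, hu.adj.symm, absurd rfl h, hm w v h]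
  have hrest (v : V) (hv : v ≠ u) : netInflow m' (s.erase u) v = netInflow m (s.erase u) v := by
    have hw (w : V) (hw : w ∈ s.erase u) : (m' w v : ℤ) = m w v ∧ (m' v w : ℤ) = m v w := by
      simp [m', ne_of_mem_erase hw, hv]
    unfold netInflow
    rw [sum_congr rfl fun w h => (hw w h).1, sum_congr rfl fun w h => (hw w h).2]
  refine ⟨m', hm', fun v hv => ?_⟩
  by_cases hvu : v = u
  · subst hvu
    rw [hu.netInflow_self hm']
    simp only [m', ↓reduceIte, if_neg huy.symm]
    omega
  · have hv' : v ∈ s.erase u := mem_erase.mpr ⟨hvu, hv⟩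
    have := hC v hv'
    rw [netInflow_eq_add_erase m' hu.mem, hrest v hvu]
    by_cases hvy : v = y
    · subst hvy
      simp only [leafContraction, ↓reduceIte, leafGain_eq] at this
      simp only [m', ↓reduceIte, if_neg hvu]
      linarith
    · simp only [leafContraction, if_neg hvy] at this
      simp only [m', if_neg hvu, if_neg hvy, ↓reduceIte, Nat.cast_zero]
      linarith

lemma IsLeafIn.feasible_erase_iff (hu : IsLeafIn G s u y) :
    Feasible G (s.erase u) (leafContraction C u y) ↔ Feasible G s C :=
  ⟨hu.feasible_of_erase, hu.feasible_erase⟩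

end Feasible

lemma leafContraction_add {C g : V → ℤ} {u : V} (y : V) (hg : g u = 0) :
    leafContraction (C + g) u y = leafContraction C u y + g := by
  funext w
  by_cases hw : w = y <;> simp [leafContraction, hw, hg]
  ring

namespace Contract

variable {G : SimpleGraph V} {s s' : Finset V} {C C' : V → ℤ}

lemma subset (h : Contract G s C s' C') : s' ⊆ s := by
  induction h with
  | refl => exact Finset.Subset.rfl
  | step x y hx hy hadj hleaf h ih => exact ih.trans (erase_subset x _)

lemma feasible_iff (h : Contract G s C s' C') : Feasible G s C ↔ Feasible G s' C' := by
  induction h with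
  | refl => exact Iff.rfl
  | step x y hx hy hadj hleaf h ih =>
    exact (IsLeafIn.feasible_erase_iff ⟨hx, hy, hadj, hleaf⟩).symm.trans ih

lemma add (h : Contract G s C s' C') (g : V → ℤ) (hg : ∀ v ∉ s', g v = 0) :
    Contract G s (C + g) s' (C' + g) := by
  induction h with
  | refl => exact Contract.refl _ _
  | @step s C x y hx hy hadj hleaf s' C' h ih =>
    refine Contract.step x y hx hy hadj hleaf ?_
    have hgx : g x = 0 := hg x fun hx' => notMem_erase x _ (h.subset hx')
    change Contract G (s.erase x) (leafContraction (C + g) x y) s' (C' + g)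
    rw [leafContraction_add y hgx]
    exact ih hg

lemma apply_eq_of_adj_mem (h : Contract G s C s' C') {v : V} (hv : v ∈ s')
    (hnbr : ∀ w, G.Adj v w → w ∈ s') : C' v = C v := by
  induction h with
  | refl => rfl
  | step x y hx hy hadj hleaf h ih =>
    have hvy : v ≠ y := by
      rintro rfl
      exact notMem_erase x _ (h.subset (hnbr x hadj.symm))
    rw [ih hv hnbr]
    simp [hvy]

end Contract

section Pebbling

variable {G : SimpleGraph V}

lemma PebReach.exists_netInflow [Fintype V] {D F : V → ℕ} (h : PebReach G D F) :
    ∃ m : V → V → ℕ, (∀ u v, m u v ≠ 0 → G.Adj u v) ∧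
      ∀ v, (F v : ℤ) = D v + netInflow m univ v := by
  induction h with
  | refl => exact ⟨0, fun _ _ h => absurd rfl h, fun v => by simp [netInflow]⟩
  | tail _ hstep ih =>
    obtain ⟨m, hm, hF⟩ := ih
    obtain ⟨u₀, v₀, hadj, h2, rfl⟩ := hstep
    refine ⟨fun u v => m u v + if u = u₀ ∧ v = v₀ then 1 else 0, fun u v huv => ?_,
      fun v => ?_⟩
    · by_cases h : u = u₀ ∧ v = v₀
      · exact h.1 ▸ h.2 ▸ hadj
      · exact hm u v (by simpa [h] using huv)
    · have := hF v
      simp only [netInflow, Nat.cast_add, sum_add_distrib, Nat.cast_ite, Nat.cast_one,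
        Nat.cast_zero, ite_and, sum_ite_eq', mem_univ, ↓reduceIte] at this ⊢
      have hne : u₀ ≠ v₀ := hadj.ne
      split_ifs <;> simp_all <;> omega

lemma Solvable.feasible [Fintype V] {ω D : V → ℕ} (h : Solvable G ω D) :
    Feasible G univ (fun v => (D v : ℤ) - ω v) := by
  obtain ⟨F, hDF, hF⟩ := h
  obtain ⟨m, hm, hFm⟩ := hDF.exists_netInflow
  exact ⟨m, hm, fun v _ => by linarith [hFm v, (Nat.cast_le (α := ℤ)).mpr (hF v)]⟩

lemma PebReach.move {u y : V} (hadj : G.Adj u y) (k : ℕ) (D : V → ℕ) (hk : 2 * k ≤ D u) :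
    PebReach G D (fun v => if v = u then D u - 2 * k else if v = y then D y + k else D v) := by
  induction k with
  | zero =>
    have hD : (fun v => if v = u then D u - 2 * 0 else if v = y then D y + 0 else D v) = D := by
      funext v
      split_ifs <;> simp_all
    rw [hD]
    exact Relation.ReflTransGen.refl
  | succ k ih =>
    refine (ih (by omega)).tail ⟨u, y, hadj, by simp; omega, ?_⟩
    funext v
    have := hadj.ne
    by_cases hu : v = u <;> by_cases hy : v = y <;> simp_all <;> omega

end Pebbling

inductive Prunable (G : SimpleGraph V) : Finset V → Prop
  | singleton (r : V) : Prunable G {r}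
  | erase_leaf {s : Finset V} {u y : V} (hu : IsLeafIn G s u y) (h : Prunable G (s.erase u)) :
      Prunable G s

section Prunable

variable {G : SimpleGraph V}

def Realizable (G : SimpleGraph V) (s : Finset V) : Prop :=
  ∀ D ω : V → ℕ, Feasible G s (fun v => (D v : ℤ) - ω v) →
    ∃ F, PebReach G D F ∧ (∀ v ∈ s, ω v ≤ F v) ∧ ∀ v ∉ s, F v = D v

lemma realizable_singleton (r : V) : Realizable G {r} := by
  intro D ω h
  refine ⟨D, Relation.ReflTransGen.refl, fun v hv => ?_, fun _ _ => rfl⟩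
  have := (feasible_singleton_iff (C := fun v => (D v : ℤ) - ω v)).mp h
  rw [mem_singleton.mp hv]
  omega

variable {s : Finset V} {u y : V} {D ω : V → ℕ}

/-- A surplus at the leaf `u` is sent on to `y` before the rest is solved. -/
lemma IsLeafIn.exists_pebReach_of_le (hu : IsLeafIn G s u y) (ih : Realizable G (s.erase u))
    (hc : ω u ≤ D u)
    (hf : Feasible G (s.erase u) (leafContraction (fun v => (D v : ℤ) - ω v) u y)) :
    ∃ F, PebReach G D F ∧ (∀ v ∈ s, ω v ≤ F v) ∧ ∀ v ∉ s, F v = D v := by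
  set g := (D u - ω u) / 2
  set D' : V → ℕ := fun v => if v = u then D u - 2 * g else if v = y then D y + g else D v
  obtain ⟨F, hD'F, hωF, hF⟩ := ih D' ω <| hf.mono fun v hv => by
    have := ne_of_mem_erase hv
    simp only [leafContraction, leafGain, D']
    split_ifs with h <;> (try subst h) <;> omega
  refine ⟨F, (PebReach.move hu.adj g D (by omega)).trans hD'F, fun v hv => ?_, fun v hv => ?_⟩
  · by_cases hvu : v = u
    · rw [hF v (hvu ▸ notMem_erase u s)]
      simp only [D', hvu, ↓reduceIte]
      omega
    · exact hωF v (mem_erase.mpr ⟨hvu, hv⟩)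
  · have hvu : v ≠ u := fun h => hv (h ▸ hu.mem)
    have hvy : v ≠ y := fun h => hv (h ▸ hu.mem_neighbor)
    simp [hF v (fun h => hv (mem_of_mem_erase h)), D', hvu, hvy]

/-- A deficit at the leaf `u` is covered by `y` after the rest is solved, so `y` has to collect
twice the deficit on top of its own demand. -/
lemma IsLeafIn.exists_pebReach_of_lt (hu : IsLeafIn G s u y) (ih : Realizable G (s.erase u))
    (hc : D u < ω u)
    (hf : Feasible G (s.erase u) (leafContraction (fun v => (D v : ℤ) - ω v) u y)) :
    ∃ F, PebReach G D F ∧ (∀ v ∈ s, ω v ≤ F v) ∧ ∀ v ∉ s, F v = D v := by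
  have huy : u ≠ y := hu.adj.ne
  set d := ω u - D u
  set ω' : V → ℕ := fun v => if v = y then ω y + 2 * d else ω v
  obtain ⟨F, hDF, hωF, hF⟩ := ih D ω' <| hf.mono fun v hv => by
    simp only [leafContraction, leafGain, ω']
    split_ifs with h <;> (try subst h) <;> omega
  have hFy := hωF y (mem_erase.mpr ⟨huy.symm, hu.mem_neighbor⟩)
  have hFu := hF u (notMem_erase u s)
  simp only [ω', ↓reduceIte] at hFy
  refine ⟨_, hDF.trans (PebReach.move hu.adj.symm d F (by omega)), fun v hv => ?_,
    fun v hv => ?_⟩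
  · by_cases hvu : v = u
    · simp only [hvu, if_neg huy, ↓reduceIte]
      omega
    by_cases hvy : v = y
    · simp only [hvy, ↓reduceIte]
      omega
    · have := hωF v (mem_erase.mpr ⟨hvu, hv⟩)
      simp only [ω', if_neg hvy] at this
      simpa [hvu, hvy] using this
  · have hvu : v ≠ u := fun h => hv (h ▸ hu.mem)
    have hvy : v ≠ y := fun h => hv (h ▸ hu.mem_neighbor)
    simp [hF v (fun h => hv (mem_of_mem_erase h)), hvu, hvy]

lemma Prunable.realizable (hs : Prunable G s) : Realizable G s := by
  induction hs with
  | singleton r => exact realizable_singleton r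
  | @erase_leaf s u y hu _ ih =>
    intro D ω h
    by_cases hc : ω u ≤ D u
    · exact hu.exists_pebReach_of_le ih hc (hu.feasible_erase h)
    · exact hu.exists_pebReach_of_lt ih (not_le.mp hc) (hu.feasible_erase h)

end Prunable

namespace SimpleGraph.IsTree

variable {T : SimpleGraph V}

omit [DecidableEq V] in
lemma exists_adj_dist_add_one (hT : T.IsTree) {r u : V} (hu : u ≠ r) :
    ∃ p, T.Adj p u ∧ T.dist r p + 1 = T.dist r u := by
  obtain ⟨q, hq⟩ := hT.connected.exists_walk_length_eq_dist r u
  have hnil : ¬ q.Nil := fun h => hu h.eq.symm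
  refine ⟨q.penultimate, q.adj_penultimate hnil, ?_⟩
  have := dist_le q.dropLast
  have := q.length_dropLast_add_one hnil
  rcases hT.dist_eq_dist_add_one_of_adj r (q.adj_penultimate hnil) with h | h <;> omega

omit [DecidableEq V] in
lemma eq_of_adj_of_dist_add_one (hT : T.IsTree) {r u w₁ w₂ : V} (h₁ : T.Adj w₁ u)
    (h₂ : T.Adj w₂ u) (hd₁ : T.dist r w₁ + 1 = T.dist r u)
    (hd₂ : T.dist r w₂ + 1 = T.dist r u) : w₁ = w₂ := by
  classical
  obtain ⟨q, hq, -⟩ := hT.connected.exists_path_of_dist r u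
  have key (w : V) (hw : T.Adj w u) (hd : T.dist r w + 1 = T.dist r u) : w = q.penultimate := by
    obtain ⟨p, hp, hplen⟩ := hT.connected.exists_path_of_dist r w
    refine hT.isAcyclic.eq_penultimate_of_adj_end hq hw.symm (by_contra fun hwq => ?_)
    have hup := hT.isAcyclic.mem_support_of_ne_mem_support_of_adj_of_isPath hp hq hw hwq
    have := dist_le (p.takeUntil u hup)
    have := p.length_takeUntil_le_length hup
    omega
  rw [key w₁ h₁ hd₁, key w₂ h₂ hd₂]

/-- Vertices are pruned in order of decreasing distance from a root `r`: the farthest vertex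
of a set closed under moving towards `r` is a leaf of it. -/
theorem prunable_univ [Fintype V] (hT : T.IsTree) : Prunable T univ := by
  obtain ⟨r⟩ := hT.connected.nonempty
  suffices ∀ s : Finset V, s.Nonempty →
      (∀ v ∈ s, ∀ w, T.dist r w < T.dist r v → w ∈ s) → Prunable T s by
    exact this univ ⟨r, mem_univ r⟩ (by simp)
  intro s
  induction s using Finset.induction_on_max_value (T.dist r) with
  | empty => simp
  | insert a s has hmax ih =>
    intro _ hclosed
    rcases s.eq_empty_or_nonempty with rfl | hs
    · exact insert_empty (a := a) ▸ Prunable.singleton a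
    have har : a ≠ r := by
      rintro rfl
      obtain ⟨v, hv⟩ := hs
      have := hmax v hv
      rw [dist_self, Nat.le_zero, hT.connected.dist_eq_zero_iff] at this
      exact has (this ▸ hv)
    obtain ⟨p, hpa, hp⟩ := hT.exists_adj_dist_add_one har
    have hps : p ∈ s := (mem_insert.mp (hclosed a (mem_insert_self a s) p
      (by omega))).resolve_left hpa.ne
    refine Prunable.erase_leaf (y := p) ⟨mem_insert_self a s,
      mem_insert_of_mem hps, hpa.symm, fun z hz haz => ?_⟩ ?_
    · rcases mem_insert.mp hz with rfl | hz
      · exact absurd haz (T.loopless.irrefl z)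
      have := hmax z hz
      rcases hT.dist_eq_dist_add_one_of_adj r haz with h | h
      · exact hT.eq_of_adj_of_dist_add_one haz.symm hpa h.symm hp
      · omega
    · rw [erase_insert has]
      refine ih hs fun v hv w hw => ?_
      have hwa : w ≠ a := by rintro rfl; have := hmax v hv; omega
      exact (mem_insert.mp (hclosed v (mem_insert_of_mem hv) w hw)).resolve_left hwa

theorem solvable_iff_feasible [Fintype V] (hT : T.IsTree) {ω D : V → ℕ} :
    Solvable T ω D ↔ Feasible T univ (fun v => (D v : ℤ) - ω v) := by
  refine ⟨Solvable.feasible, fun h => ?_⟩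
  obtain ⟨F, hDF, hωF, -⟩ := hT.prunable_univ.realizable D ω h
  exact ⟨F, hDF, fun v => hωF v (mem_univ v)⟩

end SimpleGraph.IsTree

lemma le_max_add_leafGain_of_eight_mul_le {K a b N P : ℤ} (hK : 1 ≤ K) (hN : 0 ≤ N)
    (hP : 0 ≤ P) (h : 8 * K * (max (-a) 0 + max (-b) 0 + N + 1) ≤ max a 0 + max b 0 + P) :
    K * (max (-(b + leafGain a)) 0 + N + 1) ≤ max (b + leafGain a) 0 + P := by
  set M := max (-a) 0 + max (-b) 0 + N
  have hY : M + 1 ≤ K * (M + 1) := le_mul_of_one_le_left (by positivity) hK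
  have h8 : 8 * (K * (M + 1)) ≤ max a 0 + max b 0 + P := by linarith
  have hle : max (-(b + leafGain a)) 0 + N + 1 ≤ 2 * (M + 1) := by
    unfold leafGain; split_ifs <;> omega
  have hge : 2 * (K * (M + 1)) ≤ max (b + leafGain a) 0 + P := by
    generalize K * (M + 1) = Y at hY h8
    unfold leafGain; split_ifs <;> omega
  nlinarith

/-- A leaf contraction at most halves the positive mass and at most doubles the negative mass;
the factor `8` per vertex also absorbs the rounding. -/
def IsLarge (s : Finset V) (C : V → ℤ) : Prop :=
  8 ^ s.card * (∑ v ∈ s, max (-C v) 0 + 1) ≤ ∑ v ∈ s, max (C v) 0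

lemma IsLeafIn.isLarge_erase {G : SimpleGraph V} {s : Finset V} {C : V → ℤ} {u y : V}
    (hu : IsLeafIn G s u y) (h : IsLarge s C) : IsLarge (s.erase u) (leafContraction C u y) := by
  have hy : y ∈ s.erase u := mem_erase.mpr ⟨hu.adj.ne.symm, hu.mem_neighbor⟩
  have hsplit (f : V → ℤ) :
      ∑ v ∈ s, f v = f u + (f y + ∑ v ∈ (s.erase u).erase y, f v) := by
    rw [← add_sum_erase _ _ hu.mem, ← add_sum_erase _ _ hy]
  have hrest (f : ℤ → ℤ) : ∑ v ∈ s.erase u, f (leafContraction C u y v) =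
      f (C y + leafGain (C u)) + ∑ v ∈ (s.erase u).erase y, f (C v) := by
    rw [← add_sum_erase _ _ hy]
    congr 1
    · simp [leafContraction]
    · exact sum_congr rfl fun v hv => by simp [leafContraction, ne_of_mem_erase hv]
  have hnonneg (f : V → ℤ) : 0 ≤ ∑ v ∈ (s.erase u).erase y, max (f v) 0 :=
    sum_nonneg fun _ _ => le_max_right _ _
  unfold IsLarge at h ⊢
  rw [hsplit, hsplit, ← card_erase_add_one hu.mem, pow_succ] at h
  rw [hrest (fun c => max (-c) 0), hrest (fun c => max c 0)]
  exact le_max_add_leafGain_of_eight_mul_le (one_le_pow₀ (by norm_num)) (hnonneg _) (hnonneg _)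
    (by linarith)

lemma Prunable.feasible_of_isLarge {G : SimpleGraph V} {s : Finset V} (hs : Prunable G s)
    {C : V → ℤ} (h : IsLarge s C) : Feasible G s C := by
  induction hs generalizing C with
  | singleton r =>
    simp only [IsLarge, sum_singleton, card_singleton, pow_one] at h
    exact feasible_singleton_iff.mpr (by omega)
  | erase_leaf hu hs ih => exact hu.feasible_of_erase (ih (hu.isLarge_erase h))

theorem SimpleGraph.IsTree.solvable_of_sum_eq_coverNum [Fintype V] {T : SimpleGraph V}
    (hT : T.IsTree) {ω D : V → ℕ} (h : ∑ v, D v = coverNum T ω) : Solvable T ω D := by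
  refine Nat.sInf_mem (s := {N | ∀ D : V → ℕ, ∑ v, D v = N → Solvable T ω D}) ?_ D h
  refine ⟨8 ^ Fintype.card V * (∑ v, ω v + 1) + ∑ v, ω v, fun D hD => ?_⟩
  refine hT.solvable_iff_feasible.mpr (hT.prunable_univ.feasible_of_isLarge ?_)
  have hneg : ∑ v, max (-((D v : ℤ) - ω v)) 0 ≤ ∑ v, (ω v : ℤ) :=
    sum_le_sum fun v _ => by omega
  have hpos : ∑ v, ((D v : ℤ) - ω v) ≤ ∑ v, max ((D v : ℤ) - ω v) 0 :=
    sum_le_sum fun v _ => le_max_left _ _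
  have hD' : ∑ v, (D v : ℤ) =
      8 ^ Fintype.card V * (∑ v, (ω v : ℤ) + 1) + ∑ v, (ω v : ℤ) := mod_cast hD
  rw [sum_sub_distrib, hD'] at hpos
  rw [IsLarge, card_univ]
  nlinarith [pow_pos (by norm_num : (0 : ℤ) < 8) (Fintype.card V)]

omit [DecidableEq V] in
lemma SimpleGraph.IsAcyclic.not_adj_of_adj_of_adj {T : SimpleGraph V} (hT : T.IsAcyclic)
    {x y z : V} (hy : T.Adj x y) (hz : T.Adj x z) : ¬ T.Adj y z := by
  classical
  exact fun hyz => hT.cliqueFree le_rfl {x, y, z} (is3Clique_triple_iff.mpr ⟨hy, hz, hyz⟩)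

lemma feasible_insert_iff {T : SimpleGraph V} (hT : T.IsAcyclic) {x : V} {M : Finset V}
    (hM : ∀ y ∈ M, T.Adj x y) (C : V → ℤ) :
    Feasible T (insert x M) C ↔ 0 ≤ C x + ∑ y ∈ M, leafGain (C y) := by
  induction M using Finset.induction_on generalizing C with
  | empty => simpa using feasible_singleton_iff
  | @insert y M hyM ih =>
    have hxy := hM y (mem_insert_self y M)
    have hleaf : IsLeafIn T (insert x (insert y M)) y x := by
      refine ⟨by simp, by simp, hxy.symm, fun z hz hyz => ?_⟩
      rcases mem_insert.mp hz with rfl | hz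
      · rfl
      rcases mem_insert.mp hz with rfl | hz
      · exact absurd hyz (T.loopless.irrefl z)
      · exact absurd hyz (hT.not_adj_of_adj_of_adj hxy (hM z (mem_insert_of_mem hz)))
    have hxM : ∀ z ∈ M, z ≠ x := fun z hz h =>
      T.loopless.irrefl x (h ▸ hM z (mem_insert_of_mem hz))
    rw [← hleaf.feasible_erase_iff, erase_insert_of_ne hxy.ne, erase_insert hyM,
      ih (fun z hz => hM z (mem_insert_of_mem hz)), sum_insert hyM]
    simp only [leafContraction, ↓reduceIte]
    rw [sum_congr rfl fun z hz => by rw [if_neg (hxM z hz)], add_assoc]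

def starValue (T : SimpleGraph V) [Fintype V] [DecidableRel T.Adj] (x : V) (C : V → ℤ) : ℤ :=
  C x + ∑ y ∈ T.neighborFinset x, leafGain (C y)

section Star

variable {T : SimpleGraph V} [Fintype V] [DecidableRel T.Adj]

lemma starValue_add_single_self (x : V) (C : V → ℤ) (k : ℤ) :
    starValue T x (C + Pi.single x k) = starValue T x C + k := by
  have hx (y : V) (hy : y ∈ T.neighborFinset x) : (C + Pi.single x k : V → ℤ) y = C y := by
    simp [((T.mem_neighborFinset x y).mp hy).ne']
  rw [starValue, starValue, sum_congr rfl fun y hy => congrArg leafGain (hx y hy)]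
  simp only [Pi.add_apply, Pi.single_eq_same]
  ring

lemma starValue_add_single_of_adj {x j : V} (hj : T.Adj x j) (C : V → ℤ) (k : ℤ) :
    starValue T x (C + Pi.single j k) =
      starValue T x C - leafGain (C j) + leafGain (C j + k) := by
  have hj' : j ∈ T.neighborFinset x := (T.mem_neighborFinset x j).mpr hj
  simp only [starValue, ← add_sum_erase _ _ hj', Pi.add_apply, Pi.single_apply,
    if_neg hj.ne, add_zero, ↓reduceIte]
  rw [sum_congr rfl fun y hy => by rw [if_neg (ne_of_mem_erase hy), add_zero]]
  ring

omit [DecidableEq V] in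
lemma starValue_of_forall_neg {x : V} {C : V → ℤ} (hC : ∀ y, T.Adj x y → C y < 0) :
    starValue T x C = C x + 2 * ∑ y ∈ T.neighborFinset x, C y := by
  rw [starValue, mul_sum]
  congr 1
  refine sum_congr rfl fun y hy => ?_
  have := hC y ((T.mem_neighborFinset x y).mp hy)
  simp [leafGain, this.not_ge]

lemma feasible_star_iff (hT : T.IsAcyclic) (x : V) (C : V → ℤ) :
    Feasible T (insert x (T.neighborFinset x)) C ↔ 0 ≤ starValue T x C :=
  feasible_insert_iff hT (fun y hy => (T.mem_neighborFinset x y).mp hy) C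

end Star

omit [DecidableEq V] in
lemma Finset.sum_le_two_mul_of_nonpos {ι : Type*} {s : Finset ι} {f : ι → ℤ} {c : ℤ}
    (hs : 2 ≤ s.card) (hf : ∀ i ∈ s, f i ≤ c) (hc : c ≤ 0) :
    ∑ i ∈ s, f i ≤ 2 * c := by
  have := sum_le_card_nsmul s f c hf
  rw [nsmul_eq_mul] at this
  nlinarith

namespace SimpleGraph.IsTree

variable {T : SimpleGraph V} [Fintype V] [DecidableRel T.Adj] {ω D : V → ℕ} {x : V}
  {C : V → ℤ}

theorem solvable_iff_starValue_nonneg (hT : T.IsTree)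
    (hC : Contract T univ (fun w => (D w : ℤ) - ω w) (insert x (T.neighborFinset x)) C) :
    Solvable T ω D ↔ 0 ≤ starValue T x C :=
  hT.solvable_iff_feasible.trans (hC.feasible_iff.trans (feasible_star_iff hT.isAcyclic x C))

/-- Adding one pebble to `D` at `x` and moving `b` pebbles from `x` to `j` yields `γ_ω(T)`
pebbles, and shifts the induced distribution on the star by the same amounts. -/
theorem starValue_add_single_add_single_nonneg (hT : T.IsTree)
    (hsize : ∑ v, D v + 1 = coverNum T ω)
    (hC : Contract T univ (fun w => (D w : ℤ) - ω w) (insert x (T.neighborFinset x)) C)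
    {j : V} (hxj : T.Adj x j) {b : ℤ} (hbj : -D j ≤ b) (hbx : b ≤ D x + 1) :
    0 ≤ starValue T x (C + Pi.single j b + Pi.single x (1 - b)) := by
  set g : V → ℤ := Pi.single j b + Pi.single x (1 - b)
  have hDg (v : V) : 0 ≤ D v + g v := by
    simp only [g, Pi.add_apply, Pi.single_apply]
    split_ifs <;> subst_vars <;> omega
  set E : V → ℕ := fun v => (D v + g v).toNat
  have hE (v : V) : (E v : ℤ) = D v + g v := Int.toNat_of_nonneg (hDg v)
  have hEC : Contract T univ (fun w => (E w : ℤ) - ω w) (insert x (T.neighborFinset x))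
      (C + g) := by
    have hg (v : V) (hv : v ∉ insert x (T.neighborFinset x)) : g v = 0 := by
      have hvx : v ≠ x := by rintro rfl; exact hv (mem_insert_self v _)
      have hvj : v ≠ j := by
        rintro rfl; exact hv (mem_insert_of_mem ((T.mem_neighborFinset x v).mpr hxj))
      simp [g, hvx, hvj]
    convert hC.add g hg using 1
    funext w
    simp only [hE, Pi.add_apply]
    ring
  rw [add_assoc]
  refine (hT.solvable_iff_starValue_nonneg hEC).mp (hT.solvable_of_sum_eq_coverNum ?_)
  zify
  rw [← hsize, Nat.cast_add, Nat.cast_sum, sum_congr rfl fun v _ => hE v, sum_add_distrib]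
  simp [g, sum_add_distrib]

end SimpleGraph.IsTree

/-- For a distribution of `γ_ω(T) - 1` pebbles that is not `ω`-solvable, every
non-leaf vertex `x` has a neighbor `y` with `C_x(y) ≥ 0`, where `C_x` is the induced
generalized distribution on the star of `x`. -/
theorem exists_nonneg_neighbor_in_star (T : SimpleGraph V) [Fintype V]
    [DecidableRel T.Adj] (hT : T.IsTree) (ω D : V → ℕ)
    (hns : ¬ Solvable T ω D) (hsize : (∑ x, D x) = coverNum T ω - 1) :
    ∀ x : V, 2 ≤ T.degree x →
      ∀ C' : V → ℤ,
        Contract T Finset.univ (fun w => (D w : ℤ) - (ω w : ℤ))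
          (insert x (T.neighborFinset x)) C' →
        ∃ y, T.Adj x y ∧ 0 ≤ C' y := by
  intro x hdeg C hC
  have hsize' : ∑ v, D v + 1 = coverNum T ω := by
    have := mt hT.solvable_of_sum_eq_coverNum hns
    omega
  have hD := mt (hT.solvable_iff_starValue_nonneg hC).mpr hns
  by_contra! hneg
  have hCx : C x = D x - ω x := hC.apply_eq_of_adj_mem (mem_insert_self x _)
    fun w hw => mem_insert_of_mem ((T.mem_neighborFinset x w).mpr hw)
  obtain ⟨j, hj, hjmax⟩ := (T.neighborFinset x).exists_max_image C
    (card_pos.mp (by rw [card_neighborFinset_eq_degree]; omega))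
  have hxj := (T.mem_neighborFinset x j).mp hj
  have hCj := hneg j hxj
  have hS := sum_le_two_mul_of_nonpos (by rwa [card_neighborFinset_eq_degree]) hjmax hCj.le
  have hmove (b : ℤ) (hbj : -D j ≤ b) (hbx : b ≤ D x + 1) :
      0 ≤ starValue T x C - leafGain (C j) + leafGain (C j + b) + (1 - b) := by
    have := hT.starValue_add_single_add_single_nonneg hsize' hC hxj hbj hbx
    rwa [starValue_add_single_self, starValue_add_single_of_adj hxj] at this
  have h1 := hmove 0 (by omega) (by omega)
  rw [add_zero] at h1
  rw [starValue_of_forall_neg hneg] at h1 hD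
  -- now `C x = -1 - 2 ∑ C y ≥ 3`: move these spare pebbles of `x`, and one more pebble, to `j`
  have h2 := hmove (C x + 1) (by omega) (by omega)
  simp only [starValue_of_forall_neg hneg, leafGain, if_neg hCj.not_ge,
    if_pos (show 0 ≤ C j + (C x + 1) by omega)] at h2
  omega
end

section
/- Let T be a tree, v a vertex, t ≥ 1, and let P_1, ..., P_n be a path partition of T⃗_v (edges directed toward v) with lengths a_1 ≥ a_2 ≥ ... ≥ a_n. For each i let v_i be the endpoint of P_i farther from v. Then the distribution placing t·2^{a_1} − 1 pebbles on v_1 and 2^{a_i} − 1 pebbles on v_i for 2 ≤ i ≤ n does not allow moving t pebbles onto v by pebbling moves. -/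
open SimpleGraph Finset

variable {V : Type*} [DecidableEq V]

/-- A system of (directed) paths in `G`, each recorded as a walk with its endpoints. -/
abbrev PathSys (G : SimpleGraph V) := List (Σ a : V, Σ b : V, G.Walk a b)

/-- The list of lengths of the paths in the system. -/
def sysLengths {G : SimpleGraph V} (P : PathSys G) : List ℕ := P.map fun q => q.2.2.length

/-- `P` is a path partition of the directed graph whose edges are the edges of `G`
oriented so that the potential `φ` strictly decreases (for trees, `φ` is the distance
to the root or to the target subtree): the paths are directed (each dart decreases `φ`),
nontrivial, pairwise edge-disjoint, and together cover every directable edge. -/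
def IsPartitionTo (G : SimpleGraph V) (φ : V → ℕ) (P : PathSys G) : Prop :=
  (∀ q ∈ P, q.2.2.IsPath ∧ 0 < q.2.2.length ∧ ∀ d ∈ q.2.2.darts, φ d.snd < φ d.fst) ∧
  P.Pairwise (fun q r => ∀ e ∈ q.2.2.edges, e ∉ r.2.2.edges) ∧
  ∀ a b : V, G.Adj a b → φ b < φ a → ∃ q ∈ P, s(a, b) ∈ q.2.2.edges

/-- Sort a list of naturals in nonincreasing order. -/
def sortDesc (l : List ℕ) : List ℕ := l.insertionSort (· ≥ ·)

/-- `P` is a maximum path partition: its nonincreasing length sequence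
lexicographically majorizes that of every other path partition. -/
def IsMaxPartitionTo (G : SimpleGraph V) (φ : V → ℕ) (P : PathSys G) : Prop :=
  IsPartitionTo G φ P ∧ ∀ Q : PathSys G, IsPartitionTo G φ Q →
    ¬ List.Lex (· < ·) (sortDesc (sysLengths P)) (sortDesc (sysLengths Q))

/-- `∑ᵢ (2^{aᵢ} - 1)` over the path lengths of the system. -/
def pathsExtra {G : SimpleGraph V} (P : PathSys G) : ℕ :=
  ((sysLengths P).map fun a => 2 ^ a - 1).sum

/-- Vertices of the minimal subtree spanning `S`: vertices lying on a geodesic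
between two members of `S`. -/
def subtreeSpan (G : SimpleGraph V) (S : Set V) : Set V :=
  {u | ∃ x ∈ S, ∃ y ∈ S, G.dist x u + G.dist u y = G.dist x y}

/-- Distance from a vertex to a set. -/
noncomputable def distToSet (G : SimpleGraph V) (A : Set V) (u : V) : ℕ :=
  sInf {n | ∃ w ∈ A, G.dist u w = n}

/-- The potential used for `s_ω(v)`: the distance to the minimal subtree `T_ω(v)`
containing `v` and the support of `ω`. -/
noncomputable def phiOmega (G : SimpleGraph V) (ω : V → ℕ) (v : V) : V → ℕ :=
  distToSet G (subtreeSpan G (insert v {u | 0 < ω u}))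

/-!
Root `T` at `v`. If every vertex passes half of the pebbles it has gathered on to its parent, the
number gathered at `u` is `collectible D u = D u + ∑ collectible D c / 2` over the children `c`
of `u`. A pebbling move never increases `collectible D v` and `D v ≤ collectible D v`, so it
suffices to show `collectible D v ≤ t - 1` for the given distribution `D`.

The edge from `u ≠ v` towards `v` lies on exactly one path of the partition; let `h u` be the
number of edges from `u` to the end of that path (`h v = 0`), and let `k u = t` if `u` lies on
the geodesic from the start of the first path to `v` and `k u = 1` otherwise. Then
`collectible D u ≤ k u * 2 ^ h u - 1`, which is checked locally: at most one child `c` of `u`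
continues the path through `u`, and it passes on `k c * 2 ^ h u - 1`; every other child `c` ends
its path at `u` and passes on `k c - 1`; at most one child has `k c = t`; and only a vertex that
starts its path carries pebbles.
-/

namespace SimpleGraph

variable {W : Type*} {G : SimpleGraph W}

theorem IsTree.eq_of_dist_add_dist_eq (hG : G.IsTree) {s v c c' : W}
    (hc : G.dist s c + G.dist c v = G.dist s v) (hc' : G.dist s c' + G.dist c' v = G.dist s v)
    (h : G.dist c v = G.dist c' v) : c = c' := by
  obtain ⟨p, hp⟩ := hG.connected.exists_walk_length_eq_dist s c
  obtain ⟨r, hr⟩ := hG.connected.exists_walk_length_eq_dist c v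
  obtain ⟨p', hp'⟩ := hG.connected.exists_walk_length_eq_dist s c'
  obtain ⟨r', hr'⟩ := hG.connected.exists_walk_length_eq_dist c' v
  have hpath : (p.append r).IsPath :=
    (p.append r).isPath_of_length_eq_dist (by rw [Walk.length_append]; omega)
  have hpath' : (p'.append r').IsPath :=
    (p'.append r').isPath_of_length_eq_dist (by rw [Walk.length_append]; omega)
  have heq := (hG.existsUnique_path s v).unique hpath hpath'
  have hvert := congrArg (fun w => w.getVert p.length) heq
  simpa [Walk.getVert_append, show p'.length = p.length by omega] using hvert

theorem IsTree.eq_of_adj_of_dist_add_one_s12 (hG : G.IsTree) {u x y v : W} (hx : G.Adj u x)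
    (hy : G.Adj u y) (hdx : G.dist x v + 1 = G.dist u v) (hdy : G.dist y v + 1 = G.dist u v) :
    x = y :=
  hG.eq_of_dist_add_dist_eq (s := u) (v := v) (by rw [dist_eq_one_iff_adj.mpr hx]; omega)
    (by rw [dist_eq_one_iff_adj.mpr hy]; omega) (by omega)

theorem IsTree.dist_eq_dist_add_one_of_adj' (hG : G.IsTree) (v : W) {a b : W} (h : G.Adj a b) :
    G.dist a v = G.dist b v + 1 ∨ G.dist b v = G.dist a v + 1 := by
  simpa only [dist_comm (v := v)] using hG.dist_eq_dist_add_one_of_adj v h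

theorem Connected.exists_adj_dist_add_one (hG : G.Connected) {u v : W} (hu : u ≠ v) :
    ∃ x, G.Adj u x ∧ G.dist x v + 1 = G.dist u v := by
  obtain ⟨p, hp⟩ := hG.exists_walk_length_eq_dist u v
  cases p with
  | nil => exact absurd rfl hu
  | @cons _ x _ h q =>
    refine ⟨x, h, le_antisymm ?_ ?_⟩
    · have := dist_le q
      simp only [Walk.length_cons] at hp
      omega
    · have := hG.dist_triangle (u := u) (v := x) (w := v)
      rw [dist_eq_one_iff_adj.mpr h] at this
      omega

theorem dist_lt_card [Fintype W] (u v : W) : G.dist u v < Fintype.card W := by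
  by_cases h : G.Reachable u v
  · obtain ⟨p, hp, hlen⟩ := h.exists_path_of_dist
    exact hlen ▸ hp.length_lt
  · rw [dist_eq_zero_of_not_reachable h]
    exact Fintype.card_pos_iff.mpr ⟨u⟩

end SimpleGraph

namespace SimpleGraph.Walk

variable {W : Type*} {G : SimpleGraph W} {x y : W}

theorem exists_mem_darts_fst_eq_start (p : G.Walk x y) (hp : 0 < p.length) :
    ∃ d ∈ p.darts, d.fst = x := by
  cases p with
  | nil => simp at hp
  | cons h q => exact ⟨⟨(x, _), h⟩, by simp, rfl⟩

theorem exists_mem_darts_fst_eq_snd (p : G.Walk x y) {d : G.Dart} (hd : d ∈ p.darts)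
    (hy : d.snd ≠ y) : ∃ d' ∈ p.darts, d'.fst = d.snd := by
  induction p with
  | nil => simp at hd
  | cons h q ih =>
    rcases List.mem_cons.mp hd with rfl | hd
    · obtain ⟨d', hd', hfst⟩ := q.exists_mem_darts_fst_eq_start (by
        cases q with
        | nil => exact absurd rfl hy
        | cons => simp)
      exact ⟨d', by simp [hd'], hfst⟩
    · obtain ⟨d', hd', hfst⟩ := ih hd hy
      exact ⟨d', by simp [hd'], hfst⟩

theorem IsPath.snd_ne_start {p : G.Walk x y} (hp : p.IsPath) {d : G.Dart} (hd : d ∈ p.darts) :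
    d.snd ≠ x := by
  have hnodup := hp.support_nodup
  rw [← cons_map_snd_darts, List.nodup_cons] at hnodup
  exact fun h => hnodup.1 (List.mem_map.mpr ⟨d, hd, h⟩)

theorem IsPath.eq_of_snd_eq {p : G.Walk x y} (hp : p.IsPath) {d d' : G.Dart} (hd : d ∈ p.darts)
    (hd' : d' ∈ p.darts) (h : d.snd = d'.snd) : d = d' := by
  have hnodup := hp.support_nodup.sublist (List.tail_sublist _)
  rw [← map_snd_darts] at hnodup
  exact List.inj_on_of_nodup_map hnodup hd hd' h

variable {φ : W → ℕ}

theorem potential_start_eq (p : G.Walk x y) (h : ∀ d ∈ p.darts, φ d.snd + 1 = φ d.fst) :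
    φ x = φ y + p.length := by
  induction p with
  | nil => simp
  | cons hadj q ih =>
    have h₀ := h ⟨(_, _), hadj⟩ (by simp)
    have := ih fun d hd => h d (by simp [hd])
    simp only [length_cons] at h₀ ⊢
    omega

theorem potential_end_lt (p : G.Walk x y) (h : ∀ d ∈ p.darts, φ d.snd + 1 = φ d.fst)
    {d : G.Dart} (hd : d ∈ p.darts) : φ y < φ d.fst := by
  induction p with
  | nil => simp at hd
  | @cons a b c hadj q ih =>
    have hq : ∀ d ∈ q.darts, φ d.snd + 1 = φ d.fst := fun d hd => h d (by simp [hd])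
    rcases List.mem_cons.mp hd with rfl | hd
    · have h₀ : φ b + 1 = φ a := h _ List.mem_cons_self
      have := q.potential_start_eq hq
      show φ c < φ a
      omega
    · exact ih hq hd

end SimpleGraph.Walk

namespace SimpleGraph

variable {W : Type*} {G : SimpleGraph W} [Fintype W]

open Classical in
noncomputable def children (G : SimpleGraph W) (v u : W) : Finset W :=
  {c | G.Adj u c ∧ G.dist c v = G.dist u v + 1}

theorem mem_children {v u c : W} :
    c ∈ G.children v u ↔ G.Adj u c ∧ G.dist c v = G.dist u v + 1 := by
  classical
  simp [children]

theorem children_induction (v : W) {motive : W → Prop}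
    (step : ∀ u, (∀ c ∈ G.children v u, motive c) → motive u) (u : W) : motive u := by
  induction hn : Fintype.card W - G.dist u v using Nat.strong_induction_on generalizing u with
  | _ n ih =>
    refine step u fun c hc => ih _ ?_ c rfl
    have := G.dist_lt_card c v
    rw [mem_children] at hc
    omega

noncomputable def collectible (G : SimpleGraph W) (v : W) (D : W → ℕ) (u : W) : ℕ :=
  D u + ∑ c ∈ (G.children v u).attach, collectible G v D c / 2
termination_by Fintype.card W - G.dist u v
decreasing_by
  have := G.dist_lt_card c.1 v
  have := mem_children.mp c.2
  omega

theorem collectible_eq (v : W) (D : W → ℕ) (u : W) :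
    G.collectible v D u = D u + ∑ c ∈ G.children v u, G.collectible v D c / 2 := by
  rw [collectible, Finset.sum_attach (G.children v u) fun c => G.collectible v D c / 2]

theorem le_collectible (v : W) (D : W → ℕ) (u : W) : D u ≤ G.collectible v D u := by
  rw [collectible_eq]
  exact Nat.le_add_right _ _

theorem collectible_le_of_forall {v : W} {D B : W → ℕ}
    (hB : ∀ u, D u + ∑ c ∈ G.children v u, B c / 2 ≤ B u) (u : W) :
    G.collectible v D u ≤ B u := by
  induction u using G.children_induction v with
  | step u ih =>
    rw [collectible_eq]
    refine le_trans ?_ (hB u)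
    gcongr with c hc
    exact ih c hc

end SimpleGraph

section Moves

variable {W : Type*} [DecidableEq W] [Fintype W] {G : SimpleGraph W}

def pebMove (D : W → ℕ) (a b : W) : W → ℕ :=
  fun x => if x = a then D a - 2 else if x = b then D b + 1 else D x

theorem collectible_pebMove_add_le {v a b : W} {D : W → ℕ}
    (hab : a ∈ G.children v b) (ha : 2 ≤ D a) (x : W) :
    G.collectible v (pebMove D a b) x + (if x = a then 2 else 0) ≤ G.collectible v D x := by
  induction x using G.children_induction v with
  | step x ih =>
    rw [collectible_eq, collectible_eq]
    have hsum : ∑ c ∈ G.children v x, G.collectible v (pebMove D a b) c / 2 +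
        (if a ∈ G.children v x then 1 else 0) ≤
          ∑ c ∈ G.children v x, G.collectible v D c / 2 := by
      rw [← Finset.sum_ite_eq' _ a fun _ => 1, ← Finset.sum_add_distrib]
      refine Finset.sum_le_sum fun c hc => ?_
      have := ih c hc
      split_ifs at this ⊢ <;> omega
    have hx : pebMove D a b x + (if x = a then 2 else 0) ≤
        D x + if a ∈ G.children v x then 1 else 0 := by
      by_cases hxa : x = a
      · subst hxa
        simp only [pebMove, ↓reduceIte]
        omega
      · by_cases hxb : x = b
        · subst hxb; simp [pebMove, hxa, hab]
        · simp [pebMove, hxa, hxb]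
    omega

theorem collectible_pebMove_le_add (hG : G.IsTree) {v a b : W} {D : W → ℕ}
    (hba : b ∈ G.children v a) (ha : 2 ≤ D a) (x : W) :
    G.collectible v (pebMove D a b) x ≤ G.collectible v D x + if x = b then 1 else 0 := by
  have hne : a ≠ b := (mem_children.mp hba).1.ne
  induction x using G.children_induction v with
  | step x ih =>
    rw [collectible_eq, collectible_eq]
    have hsum : ∑ c ∈ G.children v x, G.collectible v (pebMove D a b) c / 2 ≤
        ∑ c ∈ G.children v x, G.collectible v D c / 2 +
          if b ∈ G.children v x then 1 else 0 := by
      rw [← Finset.sum_ite_eq' _ b fun _ => 1, ← Finset.sum_add_distrib]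
      refine Finset.sum_le_sum fun c hc => ?_
      have := ih c hc
      split_ifs at this ⊢ <;> omega
    have hparent : b ∈ G.children v x → x = a := by
      intro hbx
      rw [mem_children] at hba hbx
      exact hG.eq_of_adj_of_dist_add_one_s12 (v := v) hbx.1.symm hba.1.symm (by omega) (by omega)
    have hx : pebMove D a b x + (if b ∈ G.children v x then 1 else 0) ≤
        D x + if x = b then 1 else 0 := by
      by_cases hxa : x = a
      · subst hxa
        simp only [pebMove, ↓reduceIte, if_pos hba, if_neg hne]
        omega
      · have hbx : b ∉ G.children v x := fun h => hxa (hparent h)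
        by_cases hxb : x = b
        · subst hxb; simp [pebMove, hne.symm, hbx]
        · simp [pebMove, hxa, hxb, hbx]
    omega

theorem PebStep.collectible_le (hG : G.IsTree) (v : W) {D D' : W → ℕ} (h : PebStep G D D') :
    G.collectible v D' v ≤ G.collectible v D v := by
  obtain ⟨a, b, hab, ha, rfl⟩ := h
  change G.collectible v (pebMove D a b) v ≤ _
  rcases hG.dist_eq_dist_add_one_of_adj' v hab with hd | hd
  · exact (Nat.le_add_right _ _).trans
      (collectible_pebMove_add_le (mem_children.mpr ⟨hab.symm, hd⟩) ha v)
  · have hbv : v ≠ b := by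
      rintro rfl
      rw [dist_self] at hd
      omega
    simpa [hbv] using collectible_pebMove_le_add hG (mem_children.mpr ⟨hab, hd⟩) ha v

theorem PebReach.collectible_le (hG : G.IsTree) (v : W) {D D' : W → ℕ} (h : PebReach G D D') :
    G.collectible v D' v ≤ G.collectible v D v := by
  induction h with
  | refl => exact le_rfl
  | tail _ hstep ih => exact (hstep.collectible_le hG v).trans ih

end Moves

theorem List.sum_map_ite_eq_of_pairwise {α ι M : Type*} [DecidableEq ι] [AddCommMonoid M]
    {k : α → ι} {l : List α} (hl : l.Pairwise fun a b => k a ≠ k b) {a : α} (ha : a ∈ l)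
    (f : α → M) : (l.map fun b => if k a = k b then f b else 0).sum = f a := by
  induction l with
  | nil => simp at ha
  | cons b l ih =>
    rw [List.pairwise_cons] at hl
    rw [List.map_cons, List.sum_cons]
    rcases List.mem_cons.mp ha with rfl | ha
    · rw [if_pos rfl, List.sum_eq_zero, add_zero]
      simp only [List.mem_map]
      rintro _ ⟨c, hc, rfl⟩
      exact if_neg (hl.1 c hc)
    · rw [if_neg fun h => hl.1 a ha h.symm, zero_add, ih hl.2 ha]

theorem Finset.sum_ite_le_of_subsingleton {ι : Type*} {s : Finset ι} {p : ι → Prop}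
    [DecidablePred p] (h : ∀ a ∈ s, ∀ b ∈ s, p a → p b → a = b) (m : ℕ) :
    ∑ a ∈ s, (if p a then m else 0) ≤ m := by
  rw [Finset.sum_ite, Finset.sum_const_zero, add_zero, Finset.sum_const, smul_eq_mul]
  have : #{a ∈ s | p a} ≤ 1 := Finset.card_le_one.mpr fun a ha b hb => by
    rw [Finset.mem_filter] at ha hb
    exact h a ha.1 b hb.1 ha.2 hb.2
  simpa using Nat.mul_le_mul_right m this

namespace SimpleGraph

variable {W : Type*} [Fintype W] {G : SimpleGraph W}

theorem sum_ite_dist_add_dist_le [DecidableEq W] (hG : G.IsTree) (s v u : W) (m : ℕ) :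
    ∑ c ∈ G.children v u, (if G.dist s c + G.dist c v = G.dist s v then m else 0) ≤
      if G.dist s u + G.dist u v = G.dist s v ∧ u ≠ s then m else 0 := by
  split_ifs with hu
  · refine Finset.sum_ite_le_of_subsingleton (fun c hc c' hc' h h' => ?_) m
    rw [mem_children] at hc hc'
    exact hG.eq_of_dist_add_dist_eq h h' (by omega)
  · refine (Finset.sum_eq_zero fun c hc => if_neg fun h => hu ⟨?_, ?_⟩).le
    · rw [mem_children] at hc
      have := hG.connected.dist_triangle (u := s) (v := u) (w := v)
      have := hG.connected.dist_triangle (u := s) (v := c) (w := u)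
      rw [dist_comm (u := c), dist_eq_one_iff_adj.mpr hc.1] at this
      omega
    · rintro rfl
      rw [mem_children] at hc
      omega

end SimpleGraph

namespace IsPartitionTo

variable {W : Type*} {T : SimpleGraph W} {v : W} {P : PathSys T}
  {q q' : Σ a : W, Σ b : W, T.Walk a b} {d d' : T.Dart}

theorem dist_snd_add_one (hT : T.IsTree) (hP : IsPartitionTo T (fun u => T.dist u v) P)
    (hq : q ∈ P) (hd : d ∈ q.2.2.darts) : T.dist d.snd v + 1 = T.dist d.fst v := by
  have : T.dist d.snd v < T.dist d.fst v := (hP.1 q hq).2.2 d hd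
  rcases hT.dist_eq_dist_add_one_of_adj' v d.adj with h | h <;> omega

theorem dart_eq_of_fst_eq (hT : T.IsTree) (hP : IsPartitionTo T (fun u => T.dist u v) P)
    (hq : q ∈ P) (hq' : q' ∈ P) (hd : d ∈ q.2.2.darts) (hd' : d' ∈ q'.2.2.darts)
    (h : d.fst = d'.fst) : d = d' := by
  have h₁ := hP.dist_snd_add_one hT hq hd
  have h₂ := hP.dist_snd_add_one hT hq' hd'
  rw [← h] at h₂
  exact Dart.ext _ _ (Prod.ext h (hT.eq_of_adj_of_dist_add_one_s12 d.adj (h ▸ d'.adj) h₁ h₂))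

theorem eq_of_dart_fst_eq (hT : T.IsTree) (hP : IsPartitionTo T (fun u => T.dist u v) P)
    (hq : q ∈ P) (hq' : q' ∈ P) (hd : d ∈ q.2.2.darts) (hd' : d' ∈ q'.2.2.darts)
    (h : d.fst = d'.fst) : q = q' := by
  by_contra hne
  have : Std.Symm fun q r : Σ a : W, Σ b : W, T.Walk a b =>
      ∀ e ∈ q.2.2.edges, e ∉ r.2.2.edges :=
    ⟨fun _ _ h e hb ha => h e ha hb⟩
  refine hP.2.1.forall hq hq' hne d.edge (List.mem_map_of_mem hd) ?_
  rw [hP.dart_eq_of_fst_eq hT hq hq' hd hd' h]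
  exact List.mem_map_of_mem hd'

theorem exists_dart (hT : T.IsTree) (hP : IsPartitionTo T (fun u => T.dist u v) P) {u : W}
    (hu : u ≠ v) : ∃ q ∈ P, ∃ d ∈ q.2.2.darts, d.fst = u := by
  obtain ⟨x, hux, hx⟩ := hT.connected.exists_adj_dist_add_one hu
  obtain ⟨q, hq, he⟩ := hP.2.2 u x hux (by simp only; omega)
  obtain ⟨d, hd, hde⟩ := List.mem_map.mp he
  refine ⟨q, hq, d, hd, ?_⟩
  have := hP.dist_snd_add_one hT hq hd
  rcases dart_edge_eq_mk'_iff'.mp hde with h | h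
  · exact h.1
  · rw [h.1, h.2] at this; omega

theorem pairwise_fst_ne (hT : T.IsTree) (hP : IsPartitionTo T (fun u => T.dist u v) P) :
    P.Pairwise fun q r => q.1 ≠ r.1 := by
  refine hP.2.1.imp_of_mem fun {q r} hq hr hdisj hqr => ?_
  obtain ⟨d, hd, hdq⟩ := q.2.2.exists_mem_darts_fst_eq_start (hP.1 q hq).2.1
  obtain ⟨d', hd', hdr⟩ := r.2.2.exists_mem_darts_fst_eq_start (hP.1 r hr).2.1
  refine hdisj d.edge (List.mem_map_of_mem hd) ?_
  rw [hP.dart_eq_of_fst_eq hT hq hr hd hd' (by rw [hdq, hdr, hqr])]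
  exact List.mem_map_of_mem hd'

end IsPartitionTo

namespace PathSys

variable {W : Type*} {T : SimpleGraph W}

open Classical in
/-- The end of the path of `P` leaving `u`, or `u` itself if no path leaves `u`. -/
noncomputable def endFrom (P : PathSys T) (u : W) : W :=
  if h : ∃ q ∈ P, ∃ d ∈ q.2.2.darts, d.fst = u then h.choose.2.1 else u

noncomputable def height (P : PathSys T) (v u : W) : ℕ :=
  T.dist u v - T.dist (P.endFrom u) v

end PathSys

namespace IsPartitionTo

variable {W : Type*} {T : SimpleGraph W} {v : W} {P : PathSys T}
  {q : Σ a : W, Σ b : W, T.Walk a b} {d : T.Dart}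

theorem endFrom_eq (hT : T.IsTree) (hP : IsPartitionTo T (fun u => T.dist u v) P)
    (hq : q ∈ P) (hd : d ∈ q.2.2.darts) : P.endFrom d.fst = q.2.1 := by
  have hex : ∃ q ∈ P, ∃ d' ∈ q.2.2.darts, d'.fst = d.fst := ⟨q, hq, d, hd, rfl⟩
  obtain ⟨hq', d', hd', hfst⟩ := hex.choose_spec
  rw [PathSys.endFrom, dif_pos hex, hP.eq_of_dart_fst_eq hT hq' hq hd' hd hfst]

theorem dist_endFrom_le (hT : T.IsTree) (hP : IsPartitionTo T (fun u => T.dist u v) P)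
    (u : W) : T.dist (P.endFrom u) v ≤ T.dist u v := by
  by_cases hex : ∃ q ∈ P, ∃ d ∈ q.2.2.darts, d.fst = u
  · obtain ⟨q, hq, d, hd, rfl⟩ := hex
    rw [hP.endFrom_eq hT hq hd]
    exact (q.2.2.potential_end_lt (φ := (T.dist · v))
      (fun d hd => hP.dist_snd_add_one hT hq hd) hd).le
  · rw [PathSys.endFrom, dif_neg hex]

theorem height_fst (hT : T.IsTree) (hP : IsPartitionTo T (fun u => T.dist u v) P)
    (hq : q ∈ P) : P.height v q.1 = q.2.2.length := by
  obtain ⟨d, hd, hfst⟩ := q.2.2.exists_mem_darts_fst_eq_start (hP.1 q hq).2.1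
  have := q.2.2.potential_start_eq (φ := (T.dist · v))
    fun d hd => hP.dist_snd_add_one hT hq hd
  have hend := hP.endFrom_eq hT hq hd
  rw [hfst] at hend
  rw [PathSys.height, hend]
  omega

variable [Fintype W]

theorem exists_of_endFrom_ne (hT : T.IsTree) (hP : IsPartitionTo T (fun u => T.dist u v) P)
    {u c : W} (hc : c ∈ T.children v u) (h : P.endFrom c ≠ u) :
    ∃ q ∈ P, P.endFrom c = q.2.1 ∧ (∃ d ∈ q.2.2.darts, d.fst = c ∧ d.snd = u) ∧
      ∃ d ∈ q.2.2.darts, d.fst = u := by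
  rw [mem_children] at hc
  obtain ⟨q, hq, d, hd, rfl⟩ := hP.exists_dart hT (u := c) fun hcv => by
    rw [hcv, dist_self] at hc; omega
  have hsnd : d.snd = u := hT.eq_of_adj_of_dist_add_one_s12 d.adj hc.1.symm
    (hP.dist_snd_add_one hT hq hd) (by omega)
  have hend := hP.endFrom_eq hT hq hd
  obtain ⟨d', hd', hfst'⟩ :=
    q.2.2.exists_mem_darts_fst_eq_snd hd (by rw [hsnd, ← hend]; exact Ne.symm h)
  exact ⟨q, hq, hend, ⟨d, hd, rfl, hsnd⟩, d', hd', hfst'.trans hsnd⟩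

theorem endFrom_eq_endFrom_of_mem_children (hT : T.IsTree)
    (hP : IsPartitionTo T (fun u => T.dist u v) P) {u c : W} (hc : c ∈ T.children v u)
    (h : P.endFrom c ≠ u) : P.endFrom c = P.endFrom u := by
  obtain ⟨q, hq, hend, -, d, hd, rfl⟩ := hP.exists_of_endFrom_ne hT hc h
  rw [hend, hP.endFrom_eq hT hq hd]

theorem eq_of_mem_children_of_endFrom_ne (hT : T.IsTree)
    (hP : IsPartitionTo T (fun u => T.dist u v) P) {u c c' : W} (hc : c ∈ T.children v u)
    (hc' : c' ∈ T.children v u) (h : P.endFrom c ≠ u) (h' : P.endFrom c' ≠ u) : c = c' := by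
  obtain ⟨q, hq, -, ⟨d, hd, rfl, hsnd⟩, e, he, hefst⟩ := hP.exists_of_endFrom_ne hT hc h
  obtain ⟨q', hq', -, ⟨d', hd', rfl, hsnd'⟩, e', he', hefst'⟩ :=
    hP.exists_of_endFrom_ne hT hc' h'
  obtain rfl := hP.eq_of_dart_fst_eq hT hq hq' he he' (hefst.trans hefst'.symm)
  rw [(hP.1 q hq).1.eq_of_snd_eq hd hd' (hsnd.trans hsnd'.symm)]

theorem endFrom_eq_of_mem_children_fst (hT : T.IsTree)
    (hP : IsPartitionTo T (fun u => T.dist u v) P) (hq : q ∈ P) {c : W}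
    (hc : c ∈ T.children v q.1) : P.endFrom c = q.1 := by
  by_contra h
  obtain ⟨q', hq', -, ⟨d, hd, -, hsnd⟩, e, he, hefst⟩ := hP.exists_of_endFrom_ne hT hc h
  obtain ⟨e', he', hefst'⟩ := q.2.2.exists_mem_darts_fst_eq_start (hP.1 q hq).2.1
  obtain rfl := hP.eq_of_dart_fst_eq hT hq' hq he he' (hefst.trans hefst'.symm)
  exact (hP.1 q' hq).1.snd_ne_start hd hsnd

end IsPartitionTo

section Distribution

variable {W : Type*} [DecidableEq W] {T : SimpleGraph W} {t : ℕ}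
  {q₁ q : Σ a : W, Σ b : W, T.Walk a b} {rest : PathSys T}

def partitionDistribution (t : ℕ) (q₁ : Σ a : W, Σ b : W, T.Walk a b) (rest : PathSys T) :
    W → ℕ :=
  fun x => (if x = q₁.1 then t * 2 ^ q₁.2.2.length - 1 else 0) +
    (rest.map fun q => if x = q.1 then 2 ^ q.2.2.length - 1 else 0).sum

theorem partitionDistribution_eq_zero {x : W} (hx : ∀ q ∈ q₁ :: rest, x ≠ q.1) :
    partitionDistribution t q₁ rest x = 0 := by
  rw [partitionDistribution, if_neg (hx q₁ List.mem_cons_self), zero_add]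
  refine List.sum_eq_zero fun n hn => ?_
  obtain ⟨q, hq, rfl⟩ := List.mem_map.mp hn
  exact if_neg (hx q (List.mem_cons_of_mem _ hq))

theorem partitionDistribution_fst (hne : (q₁ :: rest).Pairwise fun q r => q.1 ≠ r.1)
    (hq : q ∈ q₁ :: rest) :
    partitionDistribution t q₁ rest q.1 =
      (if q.1 = q₁.1 then t else 1) * 2 ^ q.2.2.length - 1 := by
  rw [List.pairwise_cons] at hne
  rcases List.mem_cons.mp hq with rfl | hq
  · rw [partitionDistribution, if_pos rfl, if_pos rfl, List.sum_eq_zero, add_zero]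
    simp only [List.mem_map]
    rintro _ ⟨r, hr, rfl⟩
    exact if_neg (hne.1 r hr)
  · have hq₁ : q.1 ≠ q₁.1 := fun h => hne.1 q hq h.symm
    rw [partitionDistribution, if_neg hq₁, if_neg hq₁, zero_add, one_mul,
      List.sum_map_ite_eq_of_pairwise (k := Sigma.fst) hne.2 hq]

theorem partitionDistribution_le (hT : T.IsTree)
    {v : W} (hP : IsPartitionTo T (fun u => T.dist u v) (q₁ :: rest)) (u : W) :
    partitionDistribution t q₁ rest u ≤
      (if u = q₁.1 then t else 1) * 2 ^ PathSys.height (q₁ :: rest) v u - 1 := by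
  by_cases h : ∃ q ∈ q₁ :: rest, u = q.1
  · obtain ⟨q, hq, rfl⟩ := h
    rw [partitionDistribution_fst (hP.pairwise_fst_ne hT) hq, hP.height_fst hT hq]
  · push Not at h
    rw [partitionDistribution_eq_zero h]
    exact Nat.zero_le _

end Distribution

section Bound

variable {W : Type*} [DecidableEq W] [Fintype W] {T : SimpleGraph W} {v : W} {t : ℕ}
  {q₁ : Σ a : W, Σ b : W, T.Walk a b} {rest : PathSys T}

theorem partitionDistribution_eq_zero_of_endFrom_ne (hT : T.IsTree)
    (hP : IsPartitionTo T (fun u => T.dist u v) (q₁ :: rest)) {u c : W}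
    (hc : c ∈ T.children v u) (h : PathSys.endFrom (q₁ :: rest) c ≠ u) :
    partitionDistribution t q₁ rest u = 0 :=
  partitionDistribution_eq_zero fun q hq hu => by
    subst hu
    exact h (hP.endFrom_eq_of_mem_children_fst hT hq hc)

noncomputable def pathBound (P : PathSys T) (s : W) (t : ℕ) (v u : W) : ℕ :=
  (if T.dist s u + T.dist u v = T.dist s v then t else 1) * 2 ^ P.height v u - 1

theorem pathBound_div_two_le {P : PathSys T} (hT : T.IsTree)
    (hP : IsPartitionTo T (fun u => T.dist u v) P) (s : W) (ht : 1 ≤ t) {u c : W}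
    (hc : c ∈ T.children v u) :
    pathBound P s t v c / 2 ≤ (if P.endFrom c ≠ u then 2 ^ P.height v u - 1 else 0) +
      if T.dist s c + T.dist c v = T.dist s v then (t - 1) * 2 ^ P.height v u else 0 := by
  have hdist := (mem_children.mp hc).2
  have hH : 0 < 2 ^ P.height v u := Nat.two_pow_pos _
  unfold pathBound
  by_cases hend : P.endFrom c = u
  · have hc1 : P.height v c = 1 := by rw [PathSys.height, hend]; omega
    rw [hc1, if_neg (not_not.mpr hend), pow_one]
    have : t - 1 ≤ (t - 1) * 2 ^ P.height v u := Nat.le_mul_of_pos_right _ hH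
    split_ifs <;> omega
  · have hcu : P.height v c = P.height v u + 1 := by
      have := hP.dist_endFrom_le hT u
      rw [PathSys.height, PathSys.height, hP.endFrom_eq_endFrom_of_mem_children hT hc hend]
      omega
    rw [hcu, if_pos hend, pow_succ]
    generalize 2 ^ P.height v u = H at *
    have : t * (H * 2) = 2 * (t * H) := by ring
    have := Nat.sub_one_mul t H
    have : H ≤ t * H := Nat.le_mul_of_pos_left H ht
    split_ifs <;> omega

theorem sum_pathBound_div_two_le {P : PathSys T} (hT : T.IsTree)
    (hP : IsPartitionTo T (fun u => T.dist u v) P) (s : W) (ht : 1 ≤ t) (u : W) :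
    ∑ c ∈ T.children v u, pathBound P s t v c / 2 ≤
      (if ∃ c ∈ T.children v u, P.endFrom c ≠ u then 2 ^ P.height v u - 1 else 0) +
        if T.dist s u + T.dist u v = T.dist s v ∧ u ≠ s then (t - 1) * 2 ^ P.height v u
        else 0 := by
  refine (Finset.sum_le_sum fun c hc => pathBound_div_two_le hT hP s ht hc).trans ?_
  rw [Finset.sum_add_distrib]
  refine add_le_add ?_ (sum_ite_dist_add_dist_le hT s v u _)
  split_ifs with hcont
  · exact Finset.sum_ite_le_of_subsingleton
      (fun c hc c' hc' => hP.eq_of_mem_children_of_endFrom_ne hT hc hc') _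
  · push Not at hcont
    exact (Finset.sum_eq_zero fun c hc => if_neg (not_not.mpr (hcont c hc))).le

theorem partitionDistribution_add_sum_le (hT : T.IsTree)
    (hP : IsPartitionTo T (fun u => T.dist u v) (q₁ :: rest)) (ht : 1 ≤ t) (u : W) :
    partitionDistribution t q₁ rest u +
        ∑ c ∈ T.children v u, pathBound (q₁ :: rest) q₁.1 t v c / 2 ≤
      pathBound (q₁ :: rest) q₁.1 t v u := by
  have hsum := sum_pathBound_div_two_le hT hP q₁.1 ht u
  have hD : partitionDistribution t q₁ rest u ≤
      if ∃ c ∈ T.children v u, PathSys.endFrom (q₁ :: rest) c ≠ u then 0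
      else (if u = q₁.1 then t else 1) * 2 ^ PathSys.height (q₁ :: rest) v u - 1 := by
    by_cases hcont : ∃ c ∈ T.children v u, PathSys.endFrom (q₁ :: rest) c ≠ u
    · rw [if_pos hcont]
      obtain ⟨c, hc, hend⟩ := hcont
      exact (partitionDistribution_eq_zero_of_endFrom_ne hT hP hc hend).le
    · exact (partitionDistribution_le hT hP u).trans_eq (if_neg hcont).symm
  have hH : 0 < 2 ^ PathSys.height (q₁ :: rest) v u := Nat.two_pow_pos _
  rw [pathBound]
  generalize 2 ^ PathSys.height (q₁ :: rest) v u = H at *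
  have := Nat.sub_one_mul t H
  have := Nat.le_mul_of_pos_left H ht
  by_cases hu : u = q₁.1
  · have hgeo : T.dist q₁.1 u + T.dist u v = T.dist q₁.1 v := by
      rw [hu, SimpleGraph.dist_self, zero_add]
    rw [if_pos hu] at hD
    rw [if_neg fun h : _ ∧ u ≠ q₁.1 => h.2 hu] at hsum
    rw [if_pos hgeo]
    split_ifs at hsum hD <;> omega
  · rw [if_neg hu] at hD
    split_ifs at hsum hD ⊢ <;> omega

theorem collectible_partitionDistribution_le (hT : T.IsTree)
    (hP : IsPartitionTo T (fun u => T.dist u v) (q₁ :: rest)) (ht : 1 ≤ t) :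
    T.collectible v (partitionDistribution t q₁ rest) v < t := by
  have := T.collectible_le_of_forall (partitionDistribution_add_sum_le hT hP ht) v
  simp only [pathBound, PathSys.height, SimpleGraph.dist_self, add_zero, if_true, zero_tsub,
    pow_zero, mul_one] at this
  omega

end Bound

theorem partition_distribution_unsolvable_general (T : SimpleGraph V) [Fintype V]
    (hT : T.IsTree) (v : V) (t : ℕ) (ht : 1 ≤ t)
    (q₁ : Σ a : V, Σ b : V, T.Walk a b) (rest : PathSys T)
    (hP : IsPartitionTo T (fun u => T.dist u v) (q₁ :: rest)) :
    ¬ ∃ D', PebReach T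
        (fun x =>
          (if x = q₁.1 then t * 2 ^ q₁.2.2.length - 1 else 0) +
          (rest.map fun q => if x = q.1 then 2 ^ q.2.2.length - 1 else 0).sum) D' ∧
      t ≤ D' v := by
  rintro ⟨D', hreach, htv⟩
  have hroot : t ≤ T.collectible v (partitionDistribution t q₁ rest) v :=
    htv.trans ((T.le_collectible v D' v).trans (hreach.collectible_le hT v))
  exact (collectible_partitionDistribution_le hT hP ht).not_ge hroot

/-- Given a path partition of the tree rooted at `v` with nonincreasing lengths,
placing `t·2^{a₁} - 1` pebbles on the far endpoint of the longest path and
`2^{aᵢ} - 1` on the far endpoints of the other paths yields a distribution from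
which `t` pebbles cannot be moved to `v`. -/
theorem partition_distribution_unsolvable (T : SimpleGraph V) [Fintype V]
    (hT : T.IsTree) (v : V) (t : ℕ) (ht : 1 ≤ t)
    (q₁ : Σ a : V, Σ b : V, T.Walk a b) (rest : PathSys T)
    (hP : IsPartitionTo T (fun u => T.dist u v) (q₁ :: rest))
    (hsorted : List.Pairwise (· ≥ ·) (sysLengths (q₁ :: rest))) :
    ¬ ∃ D', PebReach T
        (fun x =>
          (if x = q₁.1 then t * 2 ^ q₁.2.2.length - 1 else 0) +
          (rest.map fun q => if x = q.1 then 2 ^ q.2.2.length - 1 else 0).sum) D' ∧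
      t ≤ D' v :=
  partition_distribution_unsolvable_general T hT v t ht q₁ rest hP
end

section
/- Let S be a sequence of pebbling moves on a graph G whose transition digraph T(G,S) is acyclic, transforming distribution D₀ into distribution D*. Then there is a linear ordering v_1, ..., v_n of the vertices of G such that every directed edge v_i → v_j of T(G,S) satisfies i < j, and the moves of S can be rearranged so that all moves out of v_1 are performed first, then all moves out of v_2, etc., and this rearranged sequence is a valid sequence of pebbling moves from D₀ that also reaches D*. -/
/-!
Fix a linear extension of the reachability order of the acyclic transition digraph and
insertion-sort the moves by the position of their sources. Each insertion step swaps a move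
`(a, b)` with the following move `(u, v)`, where `u` precedes `a` and hence also `b`. Then
`(u, v)` was already legal before `(a, b)`, since `(a, b)` neither takes pebbles from `u` nor
gives any to it, and `(a, b)` stays legal afterwards, since `(u, v)` can only add a pebble to `a`;
both orders reach the same distribution.
-/

open SimpleGraph Finset

variable {V : Type*} [DecidableEq V]

lemma Relation.exists_equiv_fin_lt_of_acyclic {α : Type*} [Fintype α] (r : α → α → Prop)
    (hr : ∀ a, ¬ Relation.TransGen r a a) :
    ∃ e : α ≃ Fin (Fintype.card α), ∀ a b, r a b → e a < e b := by
  let : PartialOrder α :=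
    { le := Relation.ReflTransGen r
      le_refl := fun _ => .refl
      le_trans := fun _ _ _ => .trans
      le_antisymm := fun a b hab hba => by
        rcases Relation.reflTransGen_iff_eq_or_transGen.1 hab with rfl | hab
        · rfl
        · exact (hr a (hab.trans_left hba)).elim }
  let : Fintype (LinearExtension α) := ‹Fintype α›
  let iso := (Fintype.orderIsoFinOfCardEq (LinearExtension α) rfl).symm
  have hmono : StrictMono (toLinearExtension : α →o LinearExtension α) :=
    toLinearExtension.monotone.strictMono_of_injective fun _ _ h => h
  refine ⟨iso.toEquiv, fun a b hab => iso.strictMono (hmono ?_)⟩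
  exact lt_of_le_not_ge (.single hab) fun hba => hr a (.head' hab hba)

def pebbleMove (D : V → ℕ) (u v : V) : V → ℕ :=
  fun x => if x = u then D u - 2 else if x = v then D v + 1 else D x

-- `ha` is needed for `v = a`, where `(D a - 2) + 1 = (D a + 1) - 2` only if `2 ≤ D a`.
lemma pebbleMove_comm {D : V → ℕ} {a b u v : V} (ha : 2 ≤ D a) (hau : a ≠ u) (hbu : b ≠ u) :
    pebbleMove (pebbleMove D a b) u v = pebbleMove (pebbleMove D u v) a b := by
  funext x
  simp only [pebbleMove]
  split_ifs <;> subst_vars <;> simp_all; omega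

namespace ValidSeq

variable {G : SimpleGraph V} {D D' : V → ℕ} {S : List (V × V)}

lemma cons_iff {u v : V} :
    ValidSeq G D ((u, v) :: S) D' ↔ G.Adj u v ∧ 2 ≤ D u ∧ ValidSeq G (pebbleMove D u v) S D' := by
  constructor
  · rintro (_ | ⟨_, _, _, huv, hu, h⟩)
    exact ⟨huv, hu, h⟩
  · rintro ⟨huv, hu, h⟩
    exact .cons D u v huv hu h

lemma swap {a b u v : V} (hau : a ≠ u) (hbu : b ≠ u)
    (h : ValidSeq G D ((a, b) :: (u, v) :: S) D') : ValidSeq G D ((u, v) :: (a, b) :: S) D' := by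
  obtain ⟨hab, ha, h⟩ := cons_iff.1 h
  obtain ⟨huv, hu, h⟩ := cons_iff.1 h
  refine cons_iff.2 ⟨huv, ?_, cons_iff.2 ⟨hab, ?_, ?_⟩⟩
  · simpa [pebbleMove, hau.symm, hbu.symm] using hu
  · have : pebbleMove D u v a = D a ∨ pebbleMove D u v a = D a + 1 := by
      simp only [pebbleMove, hau, if_false]
      split_ifs <;> simp_all
    omega
  · rwa [← pebbleMove_comm ha hau hbu]

lemma orderedInsert {α : Type*} [LinearOrder α] (f : V → α) {m : V × V} (hm : f m.1 < f m.2) :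
    ∀ {D : V → ℕ} {S : List (V × V)}, ValidSeq G D (m :: S) D' →
      ValidSeq G D (S.orderedInsert (fun m m' => f m.1 ≤ f m'.1) m) D'
  | _, [], h => h
  | D, x :: S, h => by
    rw [List.orderedInsert_cons]
    split_ifs with hmx
    · exact h
    · have hxm : f x.1 < f m.1 := lt_of_not_ge hmx
      have h := swap (ne_of_apply_ne f hxm.ne') (ne_of_apply_ne f (hxm.trans hm).ne') h
      obtain ⟨hx, hx2, h⟩ := cons_iff.1 h
      exact cons_iff.2 ⟨hx, hx2, orderedInsert f hm h⟩

lemma insertionSort {α : Type*} [LinearOrder α] (f : V → α) (hS : ValidSeq G D S D')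
    (hf : ∀ m ∈ S, f m.1 < f m.2) :
    ValidSeq G D (S.insertionSort (fun m m' => f m.1 ≤ f m'.1)) D' := by
  induction hS with
  | nil => exact .nil _
  | cons D u v huv hu h ih =>
    exact orderedInsert f (hf _ List.mem_cons_self)
      (.cons D u v huv hu (ih fun m hm => hf m (List.mem_cons_of_mem _ hm)))

end ValidSeq

/-- An acyclic sequence of pebbling moves can be rearranged along a topological
ordering of the vertices: there is a linear ordering of `V` respected by all moves,
and a permutation of `S` sorted by the order of the source vertices which is still a
valid move sequence from `D₀` reaching `D`. -/
theorem rearrange_acyclic_sequence (G : SimpleGraph V) [Fintype V] (D₀ D : V → ℕ)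
    (S : List (V × V)) (hS : ValidSeq G D₀ S D)
    (hacyc : ∀ u, ¬ Relation.TransGen (fun a b => (a, b) ∈ S) u u) :
    ∃ e : V ≃ Fin (Fintype.card V),
      (∀ m ∈ S, e m.1 < e m.2) ∧
      ∃ S' : List (V × V), S.Perm S' ∧
        S'.Pairwise (fun m m' => e m.1 ≤ e m'.1) ∧
        ValidSeq G D₀ S' D := by
  obtain ⟨e, he⟩ := Relation.exists_equiv_fin_lt_of_acyclic _ hacyc
  have hS_lt : ∀ m ∈ S, e m.1 < e m.2 := fun m hm => he _ _ hm
  exact ⟨e, hS_lt, _, (S.perm_insertionSort _).symm, S.pairwise_insertionSort _,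
    hS.insertionSort e hS_lt⟩
end
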